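/- arXiv:2212.06337 — 7 statements merged into one kernel-verified Lean document; each statement's English description precedes it below -/
import Mathlib

section
/- Let $(\alpha_n)$, $(\beta_n)$, $(\gamma_n)$, $(\delta_n)$, $(u_n)$, $(v_n)$ be sequences of complex numbers such that $\beta_n = \sum_{k=0}^n \alpha_k u_{n-k} v_{n+k}$ for all $n$, $\gamma_n = \sum_{k=n}^\infty \delta_k u_{k-n} v_{k+n}$ for all $n$ (with the series absolutely convergent), and the double series $\sum_{n,k} |\alpha_k u_{n-k} v_{n+k} \delta_n|$ converges. Then $\sum_{n=0}^\infty \alpha_n \gamma_n = \sum_{n=0}^\infty \beta_n \delta_n$. -/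
/-! Absolute convergence of the double series `∑_{k ≤ n} α_k u_{n-k} v_{n+k} δ_n` lets us sum
it in either order: summing over `k` first gives `∑ β_n δ_n`, summing over `n` first gives
`∑ α_k γ_k`. -/

section
variable {M : Type*} [AddCommMonoid M] [TopologicalSpace M]

theorem tsum_ite_le_eq_sum_range (g : ℕ → M) (n : ℕ) :
    ∑' k, (if k ≤ n then g k else 0) = ∑ k ∈ Finset.range (n + 1), g k := by
  rw [tsum_eq_sum (s := Finset.range (n + 1)) fun k hk =>
    if_neg (by simpa [Nat.lt_succ_iff] using hk)]
  exact Finset.sum_congr rfl fun k hk => if_pos (Nat.lt_succ_iff.mp (Finset.mem_range.mp hk))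

theorem hasSum_ite_le_iff (g : ℕ → M) (k : ℕ) {a : M} :
    HasSum (fun n => if k ≤ n then g n else 0) a ↔ HasSum (fun j => g (k + j)) a := by
  have hzero : ∀ n ∉ Set.range (k + ·), (if k ≤ n then g n else 0) = 0 := fun n hn =>
    if_neg fun hkn => hn ⟨n - k, Nat.add_sub_cancel' hkn⟩
  rw [← (add_right_injective k).hasSum_iff hzero]
  simp only [Function.comp_def, Nat.le_add_right, if_true]

end

/-- Bailey's transform for complex sequences. -/
theorem bailey_transform (α β γ δ u v : ℕ → ℂ)
    (hβ : ∀ n, β n = ∑ k ∈ Finset.range (n + 1), α k * u (n - k) * v (n + k))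
    (hγ : ∀ n, HasSum (fun j : ℕ => δ (n + j) * u j * v (2 * n + j)) (γ n))
    (habs : Summable (fun p : ℕ × ℕ =>
      ‖(if p.2 ≤ p.1 then α p.2 * u (p.1 - p.2) * v (p.1 + p.2) * δ p.1 else 0)‖)) :
    ∑' n, α n * γ n = ∑' n, β n * δ n := by
  set f : ℕ → ℕ → ℂ := fun n k =>
    if k ≤ n then α k * u (n - k) * v (n + k) * δ n else 0
  have hrow (n : ℕ) : ∑' k, f n k = β n * δ n := by
    simp only [f, tsum_ite_le_eq_sum_range, hβ, Finset.sum_mul]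
  have hcol (k : ℕ) : ∑' n, f n k = α k * γ k := by
    refine ((hasSum_ite_le_iff _ k).mpr ?_).tsum_eq
    have hterm (j : ℕ) : α k * u (k + j - k) * v (k + j + k) * δ (k + j) =
        α k * (δ (k + j) * u j * v (2 * k + j)) := by
      rw [Nat.add_sub_cancel_left, show k + j + k = 2 * k + j by omega]
      ring
    simpa only [hterm] using (hγ k).mul_left (α k)
  have hsum : Summable (Function.uncurry f) := Summable.of_norm habs
  calc ∑' k, α k * γ k = ∑' k, ∑' n, f n k := tsum_congr fun k => (hcol k).symm
    _ = ∑' n, ∑' k, f n k := hsum.tsum_comm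
    _ = ∑' n, β n * δ n := tsum_congr hrow
end

section
/- Let $|q|<1$ and $a \in \mathbb{C}$ with no vanishing denominators. If $(\alpha_n,\beta_n)$ is a Bailey pair relative to $a$, i.e. $\beta_n = \sum_{k=0}^n \alpha_k/((q;q)_{n-k}(aq;q)_{n+k})$ for all $n$, then the pair $(\alpha'_n,\beta'_n)$ defined by $\alpha'_n = a^n q^{n^2}\alpha_n$ and $\beta'_n = \sum_{j=0}^n \frac{a^j q^{j^2}}{(q;q)_{n-j}}\beta_j$ is also a Bailey pair relative to $a$: $\beta'_n = \sum_{k=0}^n \alpha'_k/((q;q)_{n-k}(aq;q)_{n+k})$ for all $n$. -/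
/-!
Interchanging the two sums reduces the claim to the identity
`∑ₘ aᵐ q^(m(m+b)) / ((q;q)ₘ (q;q)_{N-m} (aq;q)_{m+b}) = 1 / ((q;q)_N (aq;q)_{N+b})`
with `N = n - k`, `b = 2k`. Cleared of denominators (with `y = a q^b`) this is the polynomial
identity `∑ₘ [N choose m]_q yᵐ q^(m²) (y q^(m+1);q)_{N-m} = 1`, which follows by induction on `N`:
the `q`-Pascal rule splits the sum into `(1 - y q^(N+1))` times the sum at `y` plus
`y q^(N+1)` times the sum at `y q`.
-/

/-- The q-Pochhammer symbol `(x; q)_n`. -/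
def qPoch (q x : ℂ) (n : ℕ) : ℂ := ∏ j ∈ Finset.range n, (1 - x * q ^ j)

open Finset

lemma qPoch_zero (q x : ℂ) : qPoch q x 0 = 1 := prod_range_zero _

lemma qPoch_succ (q x : ℂ) (n : ℕ) : qPoch q x (n + 1) = qPoch q x n * (1 - x * q ^ n) :=
  prod_range_succ _ _

lemma qPoch_add (q x : ℂ) (s t : ℕ) :
    qPoch q x (s + t) = qPoch q x s * qPoch q (x * q ^ s) t := by
  simp only [qPoch, prod_range_add, pow_add, mul_assoc]

section GaussianBinomial

variable {R : Type*} [CommSemiring R] (q : R)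

def qBinom : ℕ → ℕ → R
  | _, 0 => 1
  | 0, _ + 1 => 0
  | N + 1, m + 1 => qBinom N (m + 1) + q ^ (N - m) * qBinom N m

@[simp] lemma qBinom_zero_right (N : ℕ) : qBinom q N 0 = 1 := by cases N <;> rfl

lemma qBinom_succ_succ (N m : ℕ) :
    qBinom q (N + 1) (m + 1) = qBinom q N (m + 1) + q ^ (N - m) * qBinom q N m := rfl

lemma qBinom_eq_zero_of_lt : ∀ {N m : ℕ}, N < m → qBinom q N m = 0
  | 0, _ + 1, _ => rfl
  | N + 1, m + 1, h => by
    rw [qBinom_succ_succ, qBinom_eq_zero_of_lt (by omega), qBinom_eq_zero_of_lt (by omega),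
      mul_zero, add_zero]

@[simp] lemma qBinom_self : ∀ N : ℕ, qBinom q N N = 1
  | 0 => rfl
  | N + 1 => by
    rw [qBinom_succ_succ, qBinom_eq_zero_of_lt q (Nat.lt_succ_self N), qBinom_self N,
      Nat.sub_self, pow_zero, mul_one, zero_add]

end GaussianBinomial

lemma qPoch_mul_qPoch_mul_qBinom (q : ℂ) (m d : ℕ) :
    qPoch q q m * qPoch q q d * qBinom q (m + d) m = qPoch q q (m + d) := by
  induction m generalizing d with
  | zero => simp [qPoch_zero]
  | succ m ihm =>
    induction d with
    | zero => simp [qPoch_zero]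
    | succ d ihd =>
      have h := ihm (d + 1)
      rw [show m + 1 + d = m + (d + 1) by omega] at ihd
      rw [show m + 1 + (d + 1) = m + (d + 1) + 1 by omega, qBinom_succ_succ,
        show m + (d + 1) - m = d + 1 by omega, qPoch_succ q q (m + (d + 1))]
      rw [qPoch_succ q q m] at ihd ⊢
      rw [qPoch_succ q q d] at h ⊢
      linear_combination (1 - q * q ^ d) * ihd + (1 - q * q ^ m) * q ^ (d + 1) * h

lemma sum_qBinom_mul_qPoch_eq_one (q : ℂ) (N : ℕ) (y : ℂ) :
    ∑ m ∈ range (N + 1), qBinom q N m * y ^ m * q ^ m ^ 2 * qPoch q (y * q ^ (m + 1)) (N - m)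
      = 1 := by
  induction N generalizing y with
  | zero => simp [qPoch_zero]
  | succ N ih =>
    have h_left : ∑ m ∈ range (N + 2),
        qBinom q N m * y ^ m * q ^ m ^ 2 * qPoch q (y * q ^ (m + 1)) (N + 1 - m)
          = (1 - y * q ^ (N + 1)) * ∑ m ∈ range (N + 1),
            qBinom q N m * y ^ m * q ^ m ^ 2 * qPoch q (y * q ^ (m + 1)) (N - m) := by
      rw [sum_range_succ, qBinom_eq_zero_of_lt q (Nat.lt_succ_self N), zero_mul, zero_mul,
        zero_mul, add_zero, mul_sum]
      refine sum_congr rfl fun m hm => ?_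
      rw [show N + 1 - m = N - m + 1 by grind, qPoch_succ, mul_assoc y, ← pow_add,
        show m + 1 + (N - m) = N + 1 by grind]
      ring
    have h_right : ∑ m ∈ range (N + 1),
        q ^ (N - m) * qBinom q N m * y ^ (m + 1) * q ^ (m + 1) ^ 2 *
          qPoch q (y * q ^ (m + 1 + 1)) (N + 1 - (m + 1))
          = y * q ^ (N + 1) * ∑ m ∈ range (N + 1),
            qBinom q N m * (y * q) ^ m * q ^ m ^ 2 * qPoch q (y * q * q ^ (m + 1)) (N - m) := by
      rw [mul_sum]
      refine sum_congr rfl fun m hm => ?_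
      obtain ⟨d, rfl⟩ := Nat.exists_eq_add_of_le (Nat.lt_succ_iff.mp (mem_range.mp hm))
      rw [Nat.add_sub_add_right, Nat.add_sub_cancel_left]
      ring_nf
    rw [sum_range_succ' _ (N + 1)] at h_left
    rw [sum_range_succ']
    simp only [qBinom_succ_succ, add_mul, sum_add_distrib, qBinom_zero_right] at h_left ⊢
    linear_combination
      h_left + h_right + (1 - y * q ^ (N + 1)) * ih y + y * q ^ (N + 1) * ih (y * q)

lemma sum_div_qPoch_eq (q a : ℂ) (N b : ℕ) (hq : qPoch q q N ≠ 0)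
    (ha : qPoch q (a * q) (N + b) ≠ 0) :
    ∑ m ∈ range (N + 1), a ^ m * q ^ (m * (m + b)) /
        (qPoch q q m * qPoch q q (N - m) * qPoch q (a * q) (m + b))
      = 1 / (qPoch q q N * qPoch q (a * q) (N + b)) := by
  rw [eq_div_iff (mul_ne_zero hq ha), sum_mul, ← sum_qBinom_mul_qPoch_eq_one q N (a * q ^ b)]
  refine sum_congr rfl fun m hm => ?_
  obtain ⟨d, rfl⟩ := Nat.exists_eq_add_of_le (Nat.lt_succ_iff.mp (mem_range.mp hm))
  have h_split : qPoch q (a * q) (m + d + b)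
      = qPoch q (a * q) (m + b) * qPoch q (a * q ^ b * q ^ (m + 1)) d := by
    rw [show m + d + b = m + b + d by omega, qPoch_add]
    ring_nf
  rw [← qPoch_mul_qPoch_mul_qBinom] at hq ⊢
  rw [h_split] at ha ⊢
  simp only [ne_eq, mul_eq_zero, not_or] at hq ha
  rw [Nat.add_sub_cancel_left]
  field_simp [hq.1.1, hq.1.2, ha.1]
  ring

lemma sum_Ico_div_qPoch_eq (q a : ℂ) {n k : ℕ} (hkn : k ≤ n) (hq : qPoch q q (n - k) ≠ 0)
    (ha : qPoch q (a * q) (n + k) ≠ 0) :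
    ∑ j ∈ Ico k (n + 1), a ^ j * q ^ j ^ 2 /
        (qPoch q q (n - j) * qPoch q q (j - k) * qPoch q (a * q) (j + k))
      = a ^ k * q ^ k ^ 2 / (qPoch q q (n - k) * qPoch q (a * q) (n + k)) := by
  obtain ⟨N, rfl⟩ := Nat.exists_eq_add_of_le hkn
  rw [Nat.add_sub_cancel_left] at hq ⊢
  rw [show k + N + k = N + 2 * k by omega] at ha ⊢
  rw [sum_Ico_eq_sum_range, show k + N + 1 - k = N + 1 by omega, div_eq_mul_one_div _ (_ * _),
    ← sum_div_qPoch_eq q a N (2 * k) hq ha, mul_sum]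
  refine sum_congr rfl fun m _ => ?_
  rw [show k + N - (k + m) = N - m by omega, Nat.add_sub_cancel_left,
    show k + m + k = m + 2 * k by omega]
  ring

theorem bailey_lemma_special_general (q a : ℂ)
    (hden : ∀ m : ℕ, qPoch q q m ≠ 0 ∧ qPoch q (a * q) m ≠ 0)
    (α β : ℕ → ℂ)
    (hpair : ∀ n : ℕ, β n = ∑ k ∈ Finset.range (n + 1),
      α k / (qPoch q q (n - k) * qPoch q (a * q) (n + k)))
    (α' β' : ℕ → ℂ)
    (hα' : ∀ n : ℕ, α' n = a ^ n * q ^ (n ^ 2) * α n)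
    (hβ' : ∀ n : ℕ, β' n = ∑ j ∈ Finset.range (n + 1),
      a ^ j * q ^ (j ^ 2) / qPoch q q (n - j) * β j) :
    ∀ n : ℕ, β' n = ∑ k ∈ Finset.range (n + 1),
      α' k / (qPoch q q (n - k) * qPoch q (a * q) (n + k)) := by
  intro n
  have h_swap : β' n = ∑ k ∈ range (n + 1), α k * ∑ j ∈ Ico k (n + 1), a ^ j * q ^ j ^ 2 /
      (qPoch q q (n - j) * qPoch q q (j - k) * qPoch q (a * q) (j + k)) := by
    simp only [hβ', hpair, mul_sum, range_eq_Ico]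
    rw [← sum_Ico_Ico_comm]
    refine sum_congr rfl fun k _ => sum_congr rfl fun j _ => ?_
    ring
  rw [h_swap]
  refine sum_congr rfl fun k hk => ?_
  rw [sum_Ico_div_qPoch_eq q a (Nat.lt_succ_iff.mp (mem_range.mp hk)) (hden _).1 (hden _).2, hα']
  ring

/-- Bailey's lemma, special case `ρ₁, ρ₂ → ∞`: a Bailey pair relative to `a`
yields a new Bailey pair relative to `a`. -/
theorem bailey_lemma_special (q a : ℂ) (hq : ‖q‖ < 1)
    (hden : ∀ m : ℕ, qPoch q q m ≠ 0 ∧ qPoch q (a * q) m ≠ 0)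
    (α β : ℕ → ℂ)
    (hpair : ∀ n : ℕ, β n = ∑ k ∈ Finset.range (n + 1),
      α k / (qPoch q q (n - k) * qPoch q (a * q) (n + k)))
    (α' β' : ℕ → ℂ)
    (hα' : ∀ n : ℕ, α' n = a ^ n * q ^ (n ^ 2) * α n)
    (hβ' : ∀ n : ℕ, β' n = ∑ j ∈ Finset.range (n + 1),
      a ^ j * q ^ (j ^ 2) / qPoch q q (n - j) * β j) :
    ∀ n : ℕ, β' n = ∑ k ∈ Finset.range (n + 1),
      α' k / (qPoch q q (n - k) * qPoch q (a * q) (n + k)) :=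
  bailey_lemma_special_general q a hden α β hpair α' β' hα' hβ'
end

section
/- For $|q|<1$ and any $\zeta \neq 0$, Jacobi's triple product identity holds: $\sum_{n\in\mathbb{Z}} (-1)^n q^{n(n-1)/2} \zeta^n = (q;q)_\infty\,(\zeta;q)_\infty\,(q/\zeta;q)_\infty$. -/
/-!
Put `a = ζ q^{-N}` in the finite q-binomial theorem
`(a; q)_{2N} = ∑_j (-1)^j q^{j(j-1)/2} [2N, j]_q a^j`. Splitting the product at `N` turns the left
side into `(ζ; q)_N (q/ζ; q)_N` times the theta term of index `-N`, and shifting `j = n + N` turns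
the right side into that theta term times `∑_{|n| ≤ N} (-1)^n q^{n(n-1)/2} ζ^n [2N, N + n]_q`.
As `N → ∞` each central Gaussian binomial tends to `1 / (q; q)_∞`, and all of them are bounded by
`(|q|; |q|)_∞^{-2}`, so Tannery's theorem lets the limit pass through the sum.
-/

open Finset Filter Topology

section Algebra

variable {R : Type*} [CommRing R]

def qPochhammer (a q : R) (n : ℕ) : R := ∏ k ∈ range n, (1 - a * q ^ k)

theorem qPochhammer_succ (a q : R) (n : ℕ) :
    qPochhammer a q (n + 1) = qPochhammer a q n * (1 - a * q ^ n) :=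
  prod_range_succ _ n

theorem qPochhammer_add (a q : R) (m n : ℕ) :
    qPochhammer a q (m + n) = qPochhammer a q m * qPochhammer (a * q ^ m) q n := by
  simp only [qPochhammer, prod_range_add, pow_add, mul_assoc]

theorem qPochhammer_succ' (a q : R) (n : ℕ) :
    qPochhammer a q (n + 1) = (1 - a) * qPochhammer (a * q) q n := by
  rw [add_comm, qPochhammer_add]
  simp [qPochhammer]

/-- The Gaussian binomial `[m, j]_q`, defined by the q-Pascal rule so that it lives in any
commutative ring. -/
def qBinomial (q : R) : ℕ → ℕ → R
  | _, 0 => 1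
  | 0, _ + 1 => 0
  | m + 1, j + 1 => q ^ (j + 1) * qBinomial q m (j + 1) + qBinomial q m j

variable (q : R)

@[simp] theorem qBinomial_zero_right (m : ℕ) : qBinomial q m 0 = 1 := by
  cases m <;> rfl

theorem qBinomial_succ_succ (m j : ℕ) :
    qBinomial q (m + 1) (j + 1) = q ^ (j + 1) * qBinomial q m (j + 1) + qBinomial q m j := rfl

theorem qBinomial_eq_zero_of_lt {m j : ℕ} (h : m < j) : qBinomial q m j = 0 := by
  induction m generalizing j with
  | zero => obtain ⟨j, rfl⟩ := Nat.exists_eq_succ_of_ne_zero h.ne'; rfl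
  | succ m ih =>
    obtain ⟨j, rfl⟩ := Nat.exists_eq_succ_of_ne_zero (Nat.ne_zero_of_lt h)
    rw [qBinomial_succ_succ, ih (by omega), ih (by omega), mul_zero, add_zero]

@[simp] theorem qBinomial_self (m : ℕ) : qBinomial q m m = 1 := by
  induction m with
  | zero => rfl
  | succ m ih => rw [qBinomial_succ_succ, qBinomial_eq_zero_of_lt q m.lt_succ_self, ih]; ring

theorem qBinomial_mul_qPochhammer (j k : ℕ) :
    qBinomial q (j + k) j * qPochhammer q q j * qPochhammer q q k = qPochhammer q q (j + k) := by
  induction k generalizing j with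
  | zero => simp [qPochhammer]
  | succ k ihk =>
    induction j with
    | zero => simp [qPochhammer]
    | succ j ihj =>
      rw [show j + (k + 1) = j + 1 + k by omega] at ihj
      have hk := ihk (j + 1)
      rw [show j + 1 + (k + 1) = j + 1 + k + 1 by omega, qBinomial_succ_succ, qPochhammer_succ]
      simp only [qPochhammer_succ] at hk ihj ⊢
      linear_combination (q ^ (j + 1) * (1 - q * q ^ k)) * hk + (1 - q * q ^ j) * ihj

theorem qPochhammer_eq_sum_qBinomial (a : R) (m : ℕ) :
    qPochhammer a q m =
      ∑ j ∈ range (m + 1), (-1) ^ j * q ^ j.choose 2 * a ^ j * qBinomial q m j := by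
  induction m generalizing a with
  | zero => simp [qPochhammer]
  | succ m ih =>
    set t : ℕ → R := fun j ↦ (-1) ^ j * q ^ j.choose 2 * (a * q) ^ j * qBinomial q m j
    have hstep (j : ℕ) : (-1) ^ (j + 1) * q ^ (j + 1).choose 2 * a ^ (j + 1) *
        qBinomial q (m + 1) (j + 1) = t (j + 1) - a * t j := by
      simp only [t, qBinomial_succ_succ, Nat.choose_succ_succ', Nat.choose_one_right]
      ring
    have hshift : ∑ j ∈ range (m + 1), t (j + 1) = ∑ j ∈ range (m + 1), t j - t 0 := by
      simp only [sum_range_succ, sum_range_succ' t, t, qBinomial_eq_zero_of_lt q m.lt_succ_self]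
      ring
    rw [qPochhammer_succ', ih, sum_range_succ' _ (m + 1), sum_congr rfl fun j _ ↦ hstep j,
      sum_sub_distrib, ← mul_sum, hshift]
    simp only [t, pow_zero, Nat.choose_zero_succ, mul_one, qBinomial_zero_right]
    ring

end Algebra

theorem Int.mul_sub_one_ediv_two_add (m n : ℤ) :
    (m + n) * (m + n - 1) / 2 = m * (m - 1) / 2 + n * (n - 1) / 2 + m * n := by
  have hm := (Int.even_mul_pred_self m).two_dvd
  have hn := (Int.even_mul_pred_self n).two_dvd
  rw [show (m + n) * (m + n - 1) = m * (m - 1) + n * (n - 1) + 2 * (m * n) by ring]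
  generalize m * (m - 1) = a at *
  generalize n * (n - 1) = b at *
  generalize m * n = c
  omega

theorem Finset.sum_Icc_neg_eq_sum_range {M : Type*} [AddCommMonoid M] (f : ℤ → M) (N : ℕ) :
    ∑ n ∈ Icc (-(N : ℤ)) N, f n = ∑ j ∈ range (2 * N + 1), f (j - N) := by
  refine sum_nbij' (fun n ↦ (n + N).toNat) (fun j ↦ (j : ℤ) - N) ?_ ?_ ?_ ?_ ?_ <;>
    intro n hn <;> simp only [mem_Icc, mem_range] at hn ⊢
  all_goals first | omega | congr 1; omega

section FiniteTripleProduct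

variable {K : Type*} [Field K]

def jacobiTerm (q ζ : K) (n : ℤ) : K := (-1) ^ n * q ^ (n * (n - 1) / 2) * ζ ^ n

theorem jacobiTerm_natCast (q ζ : K) (j : ℕ) :
    jacobiTerm q ζ j = (-1) ^ j * q ^ j.choose 2 * ζ ^ j := by
  have h : (j : ℤ) * (j - 1) / 2 = (j.choose 2 : ℕ) := by
    rw [Nat.choose_two_right]
    rcases j with _ | j
    · rfl
    · push_cast [Nat.add_sub_cancel]
      simp
  simp [jacobiTerm, h]

theorem jacobiTerm_one (q ζ : K) : jacobiTerm q ζ 1 = -ζ := by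
  simp [jacobiTerm]

theorem jacobiTerm_neg_one (q ζ : K) : jacobiTerm q ζ (-1) = -(q / ζ) := by
  simp [jacobiTerm, div_eq_mul_inv]

variable {q ζ : K} (hq : q ≠ 0) (hζ : ζ ≠ 0)
include hq hζ

theorem jacobiTerm_add (m n : ℤ) :
    jacobiTerm q ζ (m + n) = jacobiTerm q ζ m * jacobiTerm q (ζ * q ^ m) n := by
  simp only [jacobiTerm, Int.mul_sub_one_ediv_two_add, zpow_add₀ hq, zpow_add₀ hζ,
    zpow_add₀ (neg_ne_zero.2 (one_ne_zero (α := K))), mul_zpow, ← zpow_mul]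
  ring

theorem qPochhammer_mul_jacobiTerm_neg (N : ℕ) :
    qPochhammer (ζ * q ^ (-(N : ℤ))) q N * jacobiTerm q ζ (-N) = qPochhammer (q / ζ) q N := by
  induction N with
  | zero => simp [qPochhammer, jacobiTerm]
  | succ N ih =>
    set x := ζ * q ^ (-(N : ℤ))
    have hx : x ≠ 0 := mul_ne_zero hζ (zpow_ne_zero _ hq)
    have hshift : ζ * q ^ (-((N + 1 : ℕ) : ℤ)) = x / q := by
      simp only [x, Nat.cast_succ, neg_add, zpow_add₀ hq, zpow_neg_one, div_eq_mul_inv, mul_assoc]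
    have hqN : q / ζ * q ^ N = q / x := by
      simp only [x, zpow_neg, zpow_natCast]
      field_simp
    rw [qPochhammer_succ', hshift, div_mul_cancel₀ x hq, Nat.cast_succ, neg_add,
      jacobiTerm_add hq hζ, jacobiTerm_neg_one, qPochhammer_succ, ← ih, hqN]
    field_simp
    ring

theorem qPochhammer_mul_qPochhammer_eq_sum (N : ℕ) :
    qPochhammer ζ q N * qPochhammer (q / ζ) q N =
      ∑ j ∈ range (2 * N + 1), jacobiTerm q ζ (j - N) * qBinomial q (2 * N) j := by
  set x := ζ * q ^ (-(N : ℤ))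
  have hxN : x * q ^ N = ζ := by simp [x, zpow_neg, hq]
  have hrothe := qPochhammer_eq_sum_qBinomial q x (N + N)
  rw [qPochhammer_add, hxN] at hrothe
  rw [← qPochhammer_mul_jacobiTerm_neg hq hζ N, two_mul]
  calc _ = qPochhammer x q N * qPochhammer ζ q N * jacobiTerm q ζ (-N) := by ring
    _ = _ := by
      rw [hrothe, sum_mul]
      refine sum_congr rfl fun j _ ↦ ?_
      rw [sub_eq_neg_add, jacobiTerm_add hq hζ, jacobiTerm_natCast]
      ring

end FiniteTripleProduct

noncomputable def qPochhammerInf {R : Type*} [CommRing R] [TopologicalSpace R] (a q : R) : R :=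
  ∏' k, (1 - a * q ^ k)

theorem qPochhammerInf_zero_right {R : Type*} [CommRing R] [TopologicalSpace R] (a : R) :
    qPochhammerInf a 0 = 1 - a :=
  (tprod_eq_mulSingle 0 fun k hk ↦ by simp [hk]).trans (by simp)

theorem summable_of_norm_succ_le_mul_pow_mul {E : Type*} [SeminormedAddCommGroup E]
    [CompleteSpace E] {f : ℕ → E} {c r : ℝ} (hr0 : 0 ≤ r) (hr1 : r < 1)
    (h : ∀ n, ‖f (n + 1)‖ ≤ c * r ^ n * ‖f n‖) : Summable f := by
  have hsmall : ∀ᶠ n in atTop, c * r ^ n ≤ 1 / 2 := by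
    have := (tendsto_pow_atTop_nhds_zero_of_lt_one hr0 hr1).const_mul c
    rw [mul_zero] at this
    exact this.eventually_le_const (by norm_num)
  refine summable_of_ratio_norm_eventually_le (r := 1 / 2) (by norm_num) ?_
  filter_upwards [hsmall] with n hn
  exact (h n).trans (mul_le_mul_of_nonneg_right hn (norm_nonneg _))

section NormedField

variable {𝕜 : Type*} [NormedField 𝕜] {q ζ : 𝕜}

theorem norm_mul_pow_lt_one (hq : ‖q‖ < 1) (k : ℕ) : ‖q * q ^ k‖ < 1 := by
  rw [← pow_succ', norm_pow]
  exact pow_lt_one₀ (norm_nonneg q) hq k.succ_ne_zero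

theorem one_sub_mul_pow_ne_zero (hq : ‖q‖ < 1) (k : ℕ) : 1 - q * q ^ k ≠ 0 :=
  sub_ne_zero.2 fun h ↦ (norm_mul_pow_lt_one hq k).ne (by rw [← h, norm_one])

theorem qPochhammer_self_ne_zero (hq : ‖q‖ < 1) (m : ℕ) : qPochhammer q q m ≠ 0 :=
  prod_ne_zero_iff.2 fun k _ ↦ one_sub_mul_pow_ne_zero hq k

theorem norm_qBinomial_le (q : 𝕜) (m j : ℕ) : ‖qBinomial q m j‖ ≤ qBinomial ‖q‖ m j := by
  induction m generalizing j with
  | zero => cases j <;> simp [qBinomial]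
  | succ m ih =>
    cases j with
    | zero => simp
    | succ j =>
      rw [qBinomial_succ_succ, qBinomial_succ_succ]
      refine (norm_add_le _ _).trans (add_le_add ?_ (ih j))
      rw [norm_mul, norm_pow]
      exact mul_le_mul_of_nonneg_left (ih (j + 1)) (by positivity)

theorem summable_norm_jacobiTerm (hq : ‖q‖ < 1) (hq0 : q ≠ 0) (hζ : ζ ≠ 0) :
    Summable fun n : ℤ ↦ ‖jacobiTerm q ζ n‖ := by
  refine .of_nat_of_neg_add_one ?_ ?_
  · refine summable_of_norm_succ_le_mul_pow_mul (c := ‖ζ‖) (norm_nonneg q) hq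
      fun n ↦ le_of_eq ?_
    rw [Nat.cast_succ, jacobiTerm_add hq0 hζ, jacobiTerm_one]
    simp only [norm_norm, norm_mul, norm_neg, zpow_natCast, norm_pow]
    ring
  · refine summable_of_norm_succ_le_mul_pow_mul (c := ‖q‖ ^ 2 / ‖ζ‖) (norm_nonneg q) hq
      fun n ↦ le_of_eq ?_
    rw [show -(((n + 1 : ℕ) : ℤ) + 1) = -((n : ℤ) + 1) + -1 by push_cast; ring,
      jacobiTerm_add hq0 hζ, jacobiTerm_neg_one]
    simp only [norm_norm, norm_mul, norm_neg, norm_div, norm_zpow, zpow_neg, norm_inv]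
    field_simp
    rw [zpow_add_one₀ (norm_ne_zero_iff.2 hq0), zpow_natCast]
    ring

theorem hasSum_jacobiTerm_zero_left (ζ : 𝕜) : HasSum (jacobiTerm 0 ζ) (1 - ζ) := by
  have hsupp : ∀ n ∉ ({0, 1} : Finset ℤ), jacobiTerm 0 ζ n = 0 := by
    intro n hn
    simp only [mem_insert, mem_singleton, not_or] at hn
    have h2 : 2 ≤ n * (n - 1) := by
      obtain h | h : n ≤ -1 ∨ 2 ≤ n := by omega
      all_goals nlinarith
    simp [jacobiTerm, zero_zpow _ (show n * (n - 1) / 2 ≠ 0 by omega)]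
  simpa [jacobiTerm, sub_eq_add_neg] using hasSum_sum_of_ne_finset_zero hsupp

variable [CompleteSpace 𝕜]

theorem tendsto_qPochhammer (a : 𝕜) (hq : ‖q‖ < 1) :
    Tendsto (qPochhammer a q) atTop (𝓝 (qPochhammerInf a q)) := by
  have hs : Summable fun k ↦ ‖-(a * q ^ k)‖ := by
    simpa [norm_mul, norm_pow] using
      (summable_geometric_of_lt_one (norm_nonneg q) hq).mul_left ‖a‖
  have := (multipliable_one_add_of_summable hs).tendsto_prod_tprod_nat
  simp only [← sub_eq_add_neg] at this
  exact this

theorem qPochhammerInf_self_ne_zero (hq : ‖q‖ < 1) : qPochhammerInf q q ≠ 0 := by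
  have hs : Summable fun k ↦ ‖-(q * q ^ k)‖ := by
    simpa [norm_mul, norm_pow] using
      (summable_geometric_of_lt_one (norm_nonneg q) hq).mul_left ‖q‖
  have := tprod_one_add_ne_zero_of_summable
    (fun k ↦ by rw [← sub_eq_add_neg]; exact one_sub_mul_pow_ne_zero hq k) hs
  simp only [← sub_eq_add_neg] at this
  exact this

end NormedField

section Real

variable {r : ℝ} (hr0 : 0 ≤ r) (hr1 : r < 1)
include hr0 hr1

theorem one_sub_mul_pow_mem_Icc (k : ℕ) : 1 - r * r ^ k ∈ Set.Icc 0 1 := by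
  have h := norm_mul_pow_lt_one (q := r) (by rwa [Real.norm_of_nonneg hr0]) k
  rw [Real.norm_of_nonneg (by positivity)] at h
  constructor <;> nlinarith [pow_nonneg hr0 k]

theorem qPochhammer_self_le_one (m : ℕ) : qPochhammer r r m ≤ 1 :=
  prod_le_one (fun k _ ↦ (one_sub_mul_pow_mem_Icc hr0 hr1 k).1)
    fun k _ ↦ (one_sub_mul_pow_mem_Icc hr0 hr1 k).2

theorem qPochhammerInf_self_le_qPochhammer (m : ℕ) : qPochhammerInf r r ≤ qPochhammer r r m := by
  have hanti : Antitone (qPochhammer r r) := antitone_nat_of_succ_le fun n ↦ by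
    rw [qPochhammer_succ]
    exact mul_le_of_le_one_right
      (prod_nonneg fun k _ ↦ (one_sub_mul_pow_mem_Icc hr0 hr1 k).1)
      (one_sub_mul_pow_mem_Icc hr0 hr1 n).2
  exact hanti.le_of_tendsto (tendsto_qPochhammer r (by rwa [Real.norm_of_nonneg hr0])) m

theorem qPochhammerInf_self_pos : 0 < qPochhammerInf r r := by
  have hr : ‖r‖ < 1 := by rwa [Real.norm_of_nonneg hr0]
  refine lt_of_le_of_ne ?_ (qPochhammerInf_self_ne_zero hr).symm
  exact ge_of_tendsto' (tendsto_qPochhammer r hr)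
    fun m ↦ prod_nonneg fun k _ ↦ (one_sub_mul_pow_mem_Icc hr0 hr1 k).1

theorem qBinomial_le_inv_sq (m j : ℕ) : qBinomial r m j ≤ (qPochhammerInf r r)⁻¹ ^ 2 := by
  rcases lt_or_ge m j with h | h
  · rw [qBinomial_eq_zero_of_lt r h]
    positivity
  obtain ⟨k, rfl⟩ := Nat.exists_eq_add_of_le h
  have hP := qPochhammerInf_self_pos hr0 hr1
  have hj := qPochhammerInf_self_le_qPochhammer hr0 hr1 j
  have hk := qPochhammerInf_self_le_qPochhammer hr0 hr1 k
  have hB : qBinomial r (j + k) j * (qPochhammer r r j * qPochhammer r r k) ≤ 1 := by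
    rw [← mul_assoc, qBinomial_mul_qPochhammer]
    exact qPochhammer_self_le_one hr0 hr1 _
  calc qBinomial r (j + k) j ≤ 1 / (qPochhammer r r j * qPochhammer r r k) :=
        (le_div_iff₀ (mul_pos (hP.trans_le hj) (hP.trans_le hk))).2 hB
    _ ≤ 1 / qPochhammerInf r r ^ 2 := by
        rw [sq]
        exact one_div_le_one_div_of_le (by positivity) (mul_le_mul hj hk hP.le (hP.le.trans hj))
    _ = (qPochhammerInf r r)⁻¹ ^ 2 := by rw [one_div, inv_pow]

end Real

section CompleteNormedField

variable {𝕜 : Type*} [NormedField 𝕜] [CompleteSpace 𝕜] {q ζ : 𝕜}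

theorem tendsto_qBinomial (hq : ‖q‖ < 1) {ι : Type*} {l : Filter ι} {j k : ι → ℕ}
    (hj : Tendsto j l atTop) (hk : Tendsto k l atTop) :
    Tendsto (fun i ↦ qBinomial q (j i + k i) (j i)) l (𝓝 (qPochhammerInf q q)⁻¹) := by
  have hP := tendsto_qPochhammer q hq
  have hP0 := qPochhammerInf_self_ne_zero hq
  have hjk : Tendsto (fun i ↦ j i + k i) l atTop :=
    tendsto_atTop_mono (fun i ↦ Nat.le_add_right _ _) hj
  have hlim := (hP.comp hjk).div ((hP.comp hj).mul (hP.comp hk)) (mul_ne_zero hP0 hP0)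
  rw [div_mul_cancel_left₀ hP0] at hlim
  refine hlim.congr fun i ↦ (eq_div_of_mul_eq ?_ ?_).symm
  · exact mul_ne_zero (qPochhammer_self_ne_zero hq _) (qPochhammer_self_ne_zero hq _)
  · rw [← mul_assoc]
    exact qBinomial_mul_qPochhammer q (j i) (k i)

theorem tendsto_qBinomial_two_mul (hq : ‖q‖ < 1) (n : ℤ) :
    Tendsto (fun N : ℕ ↦ qBinomial q (2 * N) (n + N).toNat) atTop (𝓝 (qPochhammerInf q q)⁻¹) := by
  refine (tendsto_qBinomial hq (j := fun N : ℕ ↦ (n + N).toNat) (k := fun N ↦ (N - n).toNat)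
    (tendsto_atTop_atTop.2 fun b ↦ ⟨b + n.natAbs, fun N hN ↦ by omega⟩)
    (tendsto_atTop_atTop.2 fun b ↦ ⟨b + n.natAbs, fun N hN ↦ by omega⟩)).congr' ?_
  filter_upwards [eventually_ge_atTop n.natAbs] with N hN
  rw [show (n + N).toNat + (N - n).toNat = 2 * N by omega]

theorem hasSum_jacobiTerm_of_ne_zero (hq : ‖q‖ < 1) (hq0 : q ≠ 0) (hζ : ζ ≠ 0) :
    HasSum (jacobiTerm q ζ)
      (qPochhammerInf q q * qPochhammerInf ζ q * qPochhammerInf (q / ζ) q) := by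
  have hsum := summable_norm_jacobiTerm hq hq0 hζ
  set C := (qPochhammerInf ‖q‖ ‖q‖)⁻¹ ^ 2
  have hC (m j : ℕ) : ‖qBinomial q m j‖ ≤ C :=
    (norm_qBinomial_le q m j).trans (qBinomial_le_inv_sq (norm_nonneg q) hq m j)
  let F (N : ℕ) : ℤ → 𝕜 := (Icc (-(N : ℤ)) N : Set ℤ).indicator
    fun n ↦ jacobiTerm q ζ n * qBinomial q (2 * N) (n + N).toNat
  have hF (N : ℕ) : ∑' n, F N n = qPochhammer ζ q N * qPochhammer (q / ζ) q N := by
    rw [← sum_eq_tsum_indicator, sum_Icc_neg_eq_sum_range,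
      qPochhammer_mul_qPochhammer_eq_sum hq0 hζ]
    simp
  have hF_lim (n : ℤ) :
      Tendsto (F · n) atTop (𝓝 (jacobiTerm q ζ n * (qPochhammerInf q q)⁻¹)) := by
    refine ((tendsto_qBinomial_two_mul hq n).const_mul _).congr' ?_
    filter_upwards [eventually_ge_atTop n.natAbs] with N hN
    have hn : n ∈ (Icc (-(N : ℤ)) N : Set ℤ) := mem_coe.2 (mem_Icc.2 ⟨by omega, by omega⟩)
    simp only [F, Set.indicator_of_mem hn]
  have hF_le (N : ℕ) (n : ℤ) : ‖F N n‖ ≤ ‖jacobiTerm q ζ n‖ * C :=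
    (norm_indicator_le_norm_self _ _).trans <| by
      rw [norm_mul]
      exact mul_le_mul_of_nonneg_left (hC _ _) (norm_nonneg _)
  have hlim := tendsto_tsum_of_dominated_convergence (hsum.mul_right C) hF_lim
    (Eventually.of_forall hF_le)
  have hprod := ((tendsto_qPochhammer ζ hq).mul (tendsto_qPochhammer (q / ζ) hq)).congr
    fun N ↦ (hF N).symm
  have hval := tendsto_nhds_unique hlim hprod
  rw [tsum_mul_right, ← eq_div_iff (inv_ne_zero (qPochhammerInf_self_ne_zero hq)),
    div_inv_eq_mul] at hval
  rw [mul_rotate, ← hval]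
  exact hsum.of_norm.hasSum

theorem hasSum_jacobiTerm (hq : ‖q‖ < 1) (hζ : ζ ≠ 0) :
    HasSum (jacobiTerm q ζ)
      (qPochhammerInf q q * qPochhammerInf ζ q * qPochhammerInf (q / ζ) q) := by
  rcases eq_or_ne q 0 with rfl | hq0
  · simpa [qPochhammerInf_zero_right] using hasSum_jacobiTerm_zero_left ζ
  · exact hasSum_jacobiTerm_of_ne_zero hq hq0 hζ

end CompleteNormedField

/-- Jacobi's triple product identity. -/
theorem jacobi_triple_product (q ζ : ℂ) (hq : ‖q‖ < 1) (hζ : ζ ≠ 0) :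
    ∑' n : ℤ, (-1 : ℂ) ^ n * q ^ ((n * (n - 1)) / 2) * ζ ^ n =
      (∏' k : ℕ, (1 - q ^ (k + 1))) * (∏' k : ℕ, (1 - ζ * q ^ k)) *
        ∏' k : ℕ, (1 - (q / ζ) * q ^ k) := by
  have h := (hasSum_jacobiTerm hq hζ).tsum_eq
  simp only [qPochhammerInf, ← pow_succ'] at h
  exact h
end

section
/- For $|q|<1$, Euler's pentagonal number theorem holds in the form $(q;q)_\infty = \sum_{b\in\mathbb{Z}} (-1)^b q^{(3b^2-b)/2} = -\sum_{b\geq 0}(-1)^b q^{\frac{3}{2}b^2+\frac{5}{2}b+1} + \sum_{b\geq 0}(-1)^b q^{\frac{3}{2}b^2+\frac{1}{2}b}$. -/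
/-!
Mathlib proves the pentagonal identity in any topological ring, provided certain auxiliary series
and products converge and a telescoping remainder tends to zero (`Pentagonal.tprod_one_sub_pow`).
For `‖x‖ < 1` the finite products of factors `1 - x ^ k` occurring there have norm at most
`exp (1 - ‖x‖)⁻¹`, since `‖1 + y‖ ≤ exp ‖y‖`; hence everything is dominated by geometric series.
The bilateral sum over `ℤ` is the sum of its terms at `-k` and at `k + 1`, `k : ℕ`.
-/

open Finset Filter Topology

theorem pentagonal_neg_natCast (n : ℕ) : pentagonal (-n) = (3 * n ^ 2 + n) / 2 := by
  have h : 3 * n ^ 2 + n = 2 * pentagonal (-n) := by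
    zify; linear_combination -two_mul_natCast_pentagonal_neg n
  omega

theorem pentagonal_natCast_add_one (n : ℕ) : pentagonal (n + 1) = (3 * n ^ 2 + 5 * n) / 2 + 1 := by
  have h : 3 * n ^ 2 + 5 * n + 2 = 2 * pentagonal (n + 1) := by
    zify; linear_combination -two_mul_natCast_pentagonal (n + 1)
  omega

theorem le_pentagonal_neg_natCast (n : ℕ) : n ≤ pentagonal (-n) := by
  rw [pentagonal_neg_natCast]
  have : n ≤ n ^ 2 := Nat.le_self_pow two_ne_zero n
  omega

theorem le_pentagonal_natCast_add_one (n : ℕ) : n ≤ pentagonal (n + 1) := by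
  rw [pentagonal_natCast_add_one]
  omega

theorem zpow_pentagonal {G : Type*} [DivInvMonoid G] (a : G) (b : ℤ) :
    a ^ ((3 * b ^ 2 - b) / 2) = a ^ pentagonal b := by
  rw [← zpow_natCast, natCast_pentagonal]
  ring_nf

theorem HasSum.of_neg_nat_of_add_one {M : Type*} [AddCommMonoid M] [TopologicalSpace M]
    [ContinuousAdd M] {f : ℤ → M} {a b : M} (h₁ : HasSum (fun n : ℕ ↦ f (-n)) a)
    (h₂ : HasSum (fun n : ℕ ↦ f (n + 1)) b) : HasSum f (a + b) := by
  rw [← (Equiv.neg ℤ).hasSum_iff]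
  exact h₁.of_nat_of_neg_add_one (by simpa using h₂)

theorem norm_neg_one_pow_mul_le {R : Type*} [NormedRing R] (n : ℕ) (y : R) :
    ‖(-1) ^ n * y‖ ≤ ‖y‖ := by
  rcases neg_one_pow_eq_or R n with h | h <;> simp [h]

section NormedRing

variable {R : Type*} [NormedCommRing R] [NormOneClass R] {x : R}

theorem norm_pow_le_pow_norm_of_le (hx : ‖x‖ < 1) {m n : ℕ} (h : m ≤ n) : ‖x ^ n‖ ≤ ‖x‖ ^ m :=
  (norm_pow_le x n).trans (pow_le_pow_of_le_one (norm_nonneg x) hx.le h)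

theorem summable_norm_pow_of_le (hx : ‖x‖ < 1) {e : ℕ → ℕ} (he : ∀ n, n ≤ e n) :
    Summable fun n ↦ ‖x ^ e n‖ :=
  (summable_geometric_of_lt_one (norm_nonneg x) hx).of_nonneg_of_le (fun _ ↦ norm_nonneg _)
    fun n ↦ norm_pow_le_pow_norm_of_le hx (he n)

theorem norm_prod_one_sub_pow_le (hx : ‖x‖ < 1) {e : ℕ → ℕ} (he : ∀ n, n ≤ e n)
    (s : Finset ℕ) : ‖∏ i ∈ s, (1 - x ^ e i)‖ ≤ Real.exp (1 - ‖x‖)⁻¹ := by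
  have hsum : ∑ i ∈ s, ‖-x ^ e i‖ ≤ (1 - ‖x‖)⁻¹ := by
    simp only [norm_neg]
    rw [← tsum_geometric_of_lt_one (norm_nonneg x) hx]
    exact (sum_le_sum fun i _ ↦ norm_pow_le_pow_norm_of_le hx (he i)).trans
      ((summable_geometric_of_lt_one (norm_nonneg x) hx).sum_le_tsum s fun _ _ ↦ by positivity)
  calc ‖∏ i ∈ s, (1 - x ^ e i)‖ ≤ ‖∏ i ∈ s, (1 + -x ^ e i) - 1‖ + ‖(1 : R)‖ := by
        simpa only [sub_eq_add_neg] using norm_le_norm_sub_add _ 1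
    _ ≤ Real.exp (∑ i ∈ s, ‖-x ^ e i‖) - 1 + 1 := by
        rw [norm_one]; gcongr; exact s.norm_prod_one_add_sub_one_le _
    _ ≤ Real.exp (1 - ‖x‖)⁻¹ := by simpa using hsum

theorem norm_pow_mul_prod_one_sub_pow_le (hx : ‖x‖ < 1) (k n : ℕ) :
    ‖x ^ ((k + 1) * n) * ∏ i ∈ range (n + 1), (1 - x ^ (k + i + 1))‖ ≤
      Real.exp (1 - ‖x‖)⁻¹ * ‖x‖ ^ n := by
  rw [mul_comm (Real.exp _)]
  exact (norm_mul_le _ _).trans <| mul_le_mul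
    (norm_pow_le_pow_norm_of_le hx (Nat.le_mul_of_pos_left n k.succ_pos))
    (norm_prod_one_sub_pow_le hx (e := fun i ↦ k + i + 1) (by omega) _) (norm_nonneg _)
    (by positivity)

theorem norm_tsum_pow_mul_prod_one_sub_pow_le (hx : ‖x‖ < 1) (k : ℕ) :
    ‖∑' n, x ^ ((k + 1) * n) * ∏ i ∈ range (n + 1), (1 - x ^ (k + i + 1))‖ ≤
      Real.exp (1 - ‖x‖)⁻¹ * (1 - ‖x‖)⁻¹ :=
  tsum_of_norm_bounded ((hasSum_geometric_of_lt_one (norm_nonneg x) hx).mul_left _)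
    (norm_pow_mul_prod_one_sub_pow_le hx k)

theorem tendsto_pentagonal_remainder (hx : ‖x‖ < 1) :
    Tendsto (fun k ↦ (-1) ^ (k + 1) * x ^ ((k + 1) * (3 * k + 4) / 2) *
      ∑' n, x ^ ((k + 1) * n) * ∏ i ∈ range (n + 1), (1 - x ^ (k + i + 1))) atTop (𝓝 0) := by
  set M := Real.exp (1 - ‖x‖)⁻¹ * (1 - ‖x‖)⁻¹
  refine squeeze_zero_norm (a := fun k ↦ ‖x‖ ^ k * M) (fun k ↦ ?_)
    (by simpa using (tendsto_pow_atTop_nhds_zero_of_lt_one (norm_nonneg x) hx).mul_const M)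
  have hk : k ≤ (k + 1) * (3 * k + 4) / 2 := by
    rw [Nat.le_div_iff_mul_le two_pos]; nlinarith
  rw [mul_assoc]
  exact (norm_neg_one_pow_mul_le _ _).trans <| (norm_mul_le _ _).trans <| mul_le_mul
    (norm_pow_le_pow_norm_of_le hx hk) (norm_tsum_pow_mul_prod_one_sub_pow_le hx k)
    (norm_nonneg _) (by positivity)

variable [CompleteSpace R]

theorem summable_neg_one_pow_mul_pow (hx : ‖x‖ < 1) {e : ℕ → ℕ} (he : ∀ n, n ≤ e n) :
    Summable fun n ↦ (-1) ^ n * x ^ e n :=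
  (summable_norm_pow_of_le hx he).of_norm_bounded fun n ↦ norm_neg_one_pow_mul_le n _

theorem multipliable_one_sub_pow_add (hx : ‖x‖ < 1) (k : ℕ) :
    Multipliable fun n ↦ 1 - x ^ (n + k + 1) := by
  simpa only [sub_eq_add_neg] using multipliable_one_add_of_summable (f := fun n ↦ -x ^ (n + k + 1))
    (by simpa only [norm_neg] using summable_norm_pow_of_le hx (e := fun n ↦ n + k + 1) (by omega))

theorem summable_pow_mul_prod_one_sub_pow (hx : ‖x‖ < 1) (k : ℕ) :
    Summable fun n ↦ x ^ ((k + 1) * n) * ∏ i ∈ range (n + 1), (1 - x ^ (k + i + 1)) :=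
  ((summable_geometric_of_lt_one (norm_nonneg x) hx).mul_left _).of_norm_bounded
    (norm_pow_mul_prod_one_sub_pow_le hx k)

theorem summable_neg_one_pow_mul_pow_pentagonal_neg (hx : ‖x‖ < 1) :
    Summable fun k : ℕ ↦ (-1) ^ k * x ^ pentagonal (-k) :=
  summable_neg_one_pow_mul_pow hx le_pentagonal_neg_natCast

theorem summable_neg_one_pow_mul_pow_pentagonal_add_one (hx : ‖x‖ < 1) :
    Summable fun k : ℕ ↦ (-1) ^ k * x ^ pentagonal (k + 1) :=
  summable_neg_one_pow_mul_pow hx le_pentagonal_natCast_add_one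

theorem tprod_one_sub_pow_eq_tsum_sub_tsum (hx : ‖x‖ < 1) :
    ∏' n, (1 - x ^ (n + 1)) =
      ∑' k : ℕ, (-1) ^ k * x ^ pentagonal (-k) - ∑' k : ℕ, (-1) ^ k * x ^ pentagonal (k + 1) := by
  have hneg := summable_neg_one_pow_mul_pow_pentagonal_neg hx
  have hadd := summable_neg_one_pow_mul_pow_pentagonal_add_one hx
  rw [← hneg.tsum_sub hadd]
  simp_rw [← mul_sub]
  exact Pentagonal.tprod_one_sub_pow (tendsto_pow_atTop_nhds_zero_of_norm_lt_one hx)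
    (summable_pow_mul_prod_one_sub_pow hx) (multipliable_one_sub_pow_add hx)
    (by simpa only [mul_sub] using hneg.sub hadd) (tendsto_pentagonal_remainder hx)

end NormedRing

theorem hasSum_neg_one_zpow_mul_zpow_pentagonal {𝕜 : Type*} [NormedField 𝕜] [CompleteSpace 𝕜]
    {q : 𝕜} (hq : ‖q‖ < 1) :
    HasSum (fun b : ℤ ↦ (-1 : 𝕜) ^ b * q ^ ((3 * b ^ 2 - b) / 2))
      (∑' k : ℕ, (-1) ^ k * q ^ pentagonal (-k) - ∑' k : ℕ, (-1) ^ k * q ^ pentagonal (k + 1)) := by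
  simp_rw [zpow_pentagonal, sub_eq_add_neg]
  refine HasSum.of_neg_nat_of_add_one ?_ ?_
  · simpa [zpow_neg, ← inv_pow] using (summable_neg_one_pow_mul_pow_pentagonal_neg hq).hasSum
  · refine (summable_neg_one_pow_mul_pow_pentagonal_add_one hq).hasSum.neg.congr_fun fun n ↦ ?_
    rw [← Nat.cast_succ, zpow_natCast, pow_succ]
    push_cast
    ring

/-- Euler's pentagonal number theorem, in bilateral and split forms. -/
theorem pentagonal_number_theorem (q : ℂ) (hq : ‖q‖ < 1) :
    (∏' k : ℕ, (1 - q ^ (k + 1))) = ∑' b : ℤ, (-1 : ℂ) ^ b * q ^ ((3 * b ^ 2 - b) / 2) ∧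
    (∏' k : ℕ, (1 - q ^ (k + 1))) =
      -(∑' b : ℕ, (-1 : ℂ) ^ b * q ^ ((3 * b ^ 2 + 5 * b) / 2 + 1)) +
        ∑' b : ℕ, (-1 : ℂ) ^ b * q ^ ((3 * b ^ 2 + b) / 2) := by
  rw [tprod_one_sub_pow_eq_tsum_sub_tsum hq]
  refine ⟨(hasSum_neg_one_zpow_mul_zpow_pentagonal hq).tsum_eq.symm, ?_⟩
  simp only [pentagonal_neg_natCast, pentagonal_natCast_add_one]
  ring
end

section
/- For any positive integers $m$ and $p$, the identity $\frac{1}{m^p} = \sum_{s_p > s_{p-1} > \cdots > s_1 > 0} \frac{1}{s_p s_{p-1}\cdots s_1}\cdot\frac{s_p!\,m!}{(s_p+m)!}$ holds, where the sum is over all strictly decreasing tuples of positive integers. -/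
/-!
Write `r n = n! m! / (n + m)!`. Since `r n - r (n + 1) = m / (n + 1) * r (n + 1)` and `r n → 0`,
the series `∑_{n > k} r n / n` telescopes to `r k / m`. Summing over the smallest entry `s₁ > k`
first, induction on `p` shows that the sum over `p`-tuples `k < s₁ < ⋯ < s_p` of
`r s_p / (s₁ ⋯ s_p)` equals `r k / m ^ p`; the theorem is the case `k = 0`, where `r 0 = 1`.
-/

open scoped Nat
open Filter Topology

theorem HasSum.sigma_of_nonneg {α : Type*} {β : α → Type*} {f : (Σ a, β a) → ℝ}
    {g : α → ℝ} {s : ℝ} (hf : ∀ x, 0 ≤ f x) (hg : HasSum g s)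
    (hfib : ∀ a, HasSum (fun b ↦ f ⟨a, b⟩) (g a)) : HasSum f s :=
  hg.sigma_of_hasSum hfib <| (summable_sigma_of_nonneg hf).2
    ⟨fun a ↦ (hfib a).summable, hg.summable.congr fun a ↦ (hfib a).tsum_eq.symm⟩

theorem hasSum_sub_succ_of_antitone {f : ℕ → ℝ} {l : ℝ} (hf : Antitone f)
    (hl : Tendsto f atTop (𝓝 l)) : HasSum (fun n ↦ f n - f (n + 1)) (f 0 - l) := by
  rw [hasSum_iff_tendsto_nat_of_nonneg fun n ↦ sub_nonneg.2 (hf n.le_succ)]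
  simp_rw [Finset.sum_range_sub']
  exact tendsto_const_nhds.sub hl

noncomputable def factorialRatio (m n : ℕ) : ℝ :=
  ((n ! * m ! : ℕ) : ℝ) / ((n + m)! : ℕ)

theorem factorialRatio_zero_right (m : ℕ) : factorialRatio m 0 = 1 := by
  simp [factorialRatio, (Nat.factorial_pos m).ne']

theorem factorialRatio_nonneg (m n : ℕ) : 0 ≤ factorialRatio m n := by
  unfold factorialRatio; positivity

theorem factorialRatio_sub_succ (m n : ℕ) :
    factorialRatio m n - factorialRatio m (n + 1) = m / (n + 1) * factorialRatio m (n + 1) := by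
  have h : (n + 1 + m)! = (n + m + 1) * (n + m)! := by
    rw [add_right_comm]; exact Nat.factorial_succ _
  simp only [factorialRatio, h, Nat.factorial_succ]
  push_cast
  field_simp
  ring

theorem antitone_factorialRatio (m : ℕ) : Antitone (factorialRatio m) :=
  antitone_nat_of_succ_le fun n ↦ sub_nonneg.1 <| by
    rw [factorialRatio_sub_succ]; have := factorialRatio_nonneg m (n + 1); positivity

theorem factorialRatio_le {m : ℕ} (hm : 0 < m) (n : ℕ) :
    factorialRatio m n ≤ m ! / (n + 1) := by
  have h : (n + 1) * n ! ≤ (n + m)! :=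
    (Nat.factorial_succ n).symm ▸ Nat.factorial_le (by omega)
  rw [factorialRatio, div_le_div_iff₀ (by positivity) (by positivity)]
  calc ((n ! * m ! : ℕ) : ℝ) * (n + 1) = m ! * ((n + 1) * n ! : ℕ) := by push_cast; ring
    _ ≤ m ! * ((n + m)! : ℕ) := by gcongr

theorem tendsto_factorialRatio_atTop {m : ℕ} (hm : 0 < m) :
    Tendsto (factorialRatio m) atTop (𝓝 0) := by
  refine squeeze_zero (factorialRatio_nonneg m) (factorialRatio_le hm) ?_
  simpa [Function.comp_def] using
    (tendsto_const_div_atTop_nhds_zero_nat (m ! : ℝ)).comp (tendsto_add_atTop_nat 1)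

def natEquivGT (k : ℕ) : ℕ ≃ {n : ℕ // k < n} where
  toFun j := ⟨j + k + 1, by omega⟩
  invFun n := n.1 - (k + 1)
  left_inv j := by simp
  right_inv n := Subtype.ext <| by have := n.2; simp; omega

theorem hasSum_inv_mul_factorialRatio {m : ℕ} (hm : 0 < m) (k : ℕ) :
    HasSum (fun n : {n : ℕ // k < n} ↦ 1 / (n : ℝ) * factorialRatio m n)
      (factorialRatio m k / m) := by
  rw [← (natEquivGT k).hasSum_iff]
  have h_anti : Antitone fun j ↦ factorialRatio m (j + k) / m := fun i j hij ↦
    div_le_div_of_nonneg_right (antitone_factorialRatio m (by omega)) (Nat.cast_nonneg m)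
  have h_lim : Tendsto (fun j ↦ factorialRatio m (j + k) / m) atTop (𝓝 0) := by
    simpa using ((tendsto_factorialRatio_atTop hm).comp (tendsto_add_atTop_nat k)).div_const _
  have h := hasSum_sub_succ_of_antitone h_anti h_lim
  rw [sub_zero, zero_add] at h
  convert h using 1
  funext j
  simp only [Function.comp_apply, natEquivGT, Equiv.coe_fn_mk]
  rw [add_right_comm j 1 k, ← sub_div, factorialRatio_sub_succ]
  push_cast
  field_simp

abbrev StrictMonoTupleGT (k p : ℕ) := {s : Fin p → ℕ // StrictMono s ∧ ∀ i, k < s i}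

def StrictMonoTupleGT.equivSingle (k : ℕ) : StrictMonoTupleGT k 1 ≃ {n : ℕ // k < n} where
  toFun s := ⟨s.1 0, s.2.2 0⟩
  invFun n := ⟨fun _ ↦ n.1, Subsingleton.strictMono _, fun _ ↦ n.2⟩
  left_inv s := Subtype.ext <| funext fun i ↦ by rw [Subsingleton.elim i 0]
  right_inv _ := rfl

def StrictMonoTupleGT.consEquiv (k p : ℕ) :
    StrictMonoTupleGT k (p + 1) ≃ Σ n : {n : ℕ // k < n}, StrictMonoTupleGT n p where
  toFun s := ⟨⟨s.1 0, s.2.2 0⟩, Fin.tail s.1,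
    (Fin.strictMono_cons.1 (Fin.cons_self_tail s.1 ▸ s.2.1)).2,
    fun i ↦ s.2.1 (Fin.succ_pos i)⟩
  invFun t := ⟨Fin.cons t.1.1 t.2.1, Fin.strictMono_cons.2 ⟨t.2.2.2, t.2.2.1⟩,
    Fin.cases t.1.2 fun i ↦ t.1.2.trans (t.2.2.2 i)⟩
  left_inv s := Subtype.ext (Fin.cons_self_tail s.1)
  right_inv _ := rfl

noncomputable def tupleTerm (m : ℕ) {p : ℕ} (s : Fin (p + 1) → ℕ) : ℝ :=
  (∏ i, 1 / (s i : ℝ)) * factorialRatio m (s (Fin.last p))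

theorem tupleTerm_nonneg (m : ℕ) {p : ℕ} (s : Fin (p + 1) → ℕ) : 0 ≤ tupleTerm m s := by
  have := factorialRatio_nonneg m (s (Fin.last p)); unfold tupleTerm; positivity

theorem tupleTerm_cons (m n : ℕ) {p : ℕ} (s : Fin (p + 1) → ℕ) :
    tupleTerm m (Fin.cons n s : Fin (p + 2) → ℕ) = 1 / (n : ℝ) * tupleTerm m s := by
  simp only [tupleTerm, Fin.prod_univ_succ, Fin.cons_zero, Fin.cons_succ, ← Fin.succ_last]
  ring

theorem hasSum_tupleTerm {m : ℕ} (hm : 0 < m) :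
    ∀ p k, HasSum (fun s : StrictMonoTupleGT k (p + 1) ↦ tupleTerm m s.1)
      (factorialRatio m k / m ^ (p + 1))
  | 0, k => by
    simpa [← (StrictMonoTupleGT.equivSingle k).symm.hasSum_iff, Function.comp_def,
      StrictMonoTupleGT.equivSingle, tupleTerm] using hasSum_inv_mul_factorialRatio hm k
  | p + 1, k => by
    rw [← (StrictMonoTupleGT.consEquiv k (p + 1)).symm.hasSum_iff]
    refine .sigma_of_nonneg (fun _ ↦ tupleTerm_nonneg m _)
      (g := fun n : {n : ℕ // k < n} ↦ 1 / (n : ℝ) * factorialRatio m n / m ^ (p + 1)) ?_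
      fun n ↦ ?_
    · have h := (hasSum_inv_mul_factorialRatio hm k).div_const ((m : ℝ) ^ (p + 1))
      rwa [pow_succ' _ (p + 1), ← div_div]
    · have h := (hasSum_tupleTerm hm p n).mul_left (1 / (n : ℝ))
      simp only [← tupleTerm_cons, ← mul_div_assoc] at h
      exact h

open Nat in
/-- `1/m^p = ∑_{s_p > ⋯ > s_1 > 0} (1/(s_p⋯s_1)) · s_p! m!/(s_p+m)!`. -/
theorem inverse_power_as_multiple_sum (m p : ℕ) (hm : 1 ≤ m) (hp : 1 ≤ p) :
    (1 : ℝ) / (m : ℝ) ^ p =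
      ∑' s : {s : Fin p → ℕ // StrictMono s ∧ ∀ i, 0 < s i},
        (∏ i : Fin p, (1 : ℝ) / (s.1 i : ℝ)) *
          ((((s.1 ⟨p - 1, by omega⟩)! * m ! : ℕ) : ℝ) /
            (((s.1 ⟨p - 1, by omega⟩ + m)! : ℕ) : ℝ)) := by
  obtain ⟨q, rfl⟩ : ∃ q, p = q + 1 := ⟨p - 1, by omega⟩
  have h := hasSum_tupleTerm hm q 0
  rw [factorialRatio_zero_right] at h
  exact h.tsum_eq.symm
end

section
/- Let $M > 0$ and $N > 0$ be positive integers and $\mu \in \{0,1,\ldots,M-1\}$ with $2\mu \not\equiv 0 \pmod{M}$. Define $\psi_{M,\mu}(n) = \varepsilon$ if $n \equiv \varepsilon\mu \pmod M$ for $\varepsilon \in \{\pm 1\}$ and $\psi_{M,\mu}(n)=0$ otherwise. Then $\lim_{t\to 0^+} \sum_{n=1}^\infty \psi_{M,\mu}(n)\, e^{\pi i n^2/(MN)}\, e^{-\pi n^2 t/M} = -\frac{1}{2MN}\sum_{n=1}^{2MN} n\,\psi_{M,\mu}(n)\, e^{\pi i n^2/(MN)}$. -/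
/-!
Put `a n = ψ(n+1) e^{πi(n+1)²/(MN)}`: it is periodic of period `P = 2MN` and has mean zero over a
period, because `ψ` is odd while the quadratic exponential is even and `2MN`-periodic. The series
is `∑ g_c(n) a n` with Gaussian weights `g_c(n) = e^{-c(n+1)²}`, `c = πt/M → 0⁺`.
Summing by parts against the partial sums `T` of `a` (bounded and periodic), and a second time
against the partial sums of `T(n+1) - A`, where `A = -(1/P) ∑ (n+1) a n` is the mean of `T(n+1)`
over a period, gives `‖∑ g_c(n) a n - g_c(0) A‖ ≤ C ∑ |Δ²g_c(n)|`. The second differences are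
`O(c e^{-c(n+1)²/2})`, and comparison with the Gaussian integral makes their sum `O(√c)`.
-/

open Filter Finset Function Topology Real MeasureTheory

theorem Function.Periodic.exists_norm_le {F : Type*} [SeminormedAddCommGroup F] {f : ℕ → F}
    {P : ℕ} (hf : Periodic f P) (hP : 0 < P) :
    ∃ C, ∀ n, ‖f n‖ ≤ C :=
  ⟨∑ k ∈ range P, ‖f k‖, fun n => hf.map_mod_nat n ▸
    single_le_sum (f := fun k => ‖f k‖) (fun _ _ => norm_nonneg _) (mem_range.2 (n.mod_lt hP))⟩

theorem Function.Periodic.partialSum {β : Type*} [AddCommMonoid β] {a : ℕ → β} {P : ℕ}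
    (ha : Periodic a P) (hmean : ∑ n ∈ range P, a n = 0) :
    Periodic (fun N => ∑ n ∈ range N, a n) P := by
  intro N
  induction N with
  | zero => simpa using hmean
  | succ N ih =>
    simp only [Nat.add_right_comm N 1 P, sum_range_succ] at ih ⊢
    rw [ih, ha N]

theorem hasSum_sub_of_tendsto {h : ℕ → ℝ} {l : ℝ} (hh : Tendsto h atTop (𝓝 l))
    (hs : Summable fun n => h n - h (n + 1)) : HasSum (fun n => h n - h (n + 1)) (h 0 - l) := by
  refine (hs.hasSum_iff_tendsto_nat).2 ?_
  simp_rw [sum_range_sub']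
  exact tendsto_const_nhds.sub hh

section

variable {E : Type*} [NormedAddCommGroup E] [NormedSpace ℝ E]

theorem Summable.smul_of_norm_le [CompleteSpace E] {g : ℕ → ℝ} {a : ℕ → E} {C : ℝ}
    (hg : Summable g) (ha : ∀ n, ‖a n‖ ≤ C) : Summable fun n => g n • a n :=
  .of_norm_bounded (hg.abs.mul_right C) fun n => by
    rw [norm_smul, Real.norm_eq_abs]
    exact mul_le_mul_of_nonneg_left (ha n) (abs_nonneg _)

theorem hasSum_sub_smul_partialSum [CompleteSpace E] {u : ℕ → E} {h : ℕ → ℝ} {C : ℝ}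
    (hU : ∀ n, ‖∑ i ∈ range n, u i‖ ≤ C) (hh : Tendsto h atTop (𝓝 0))
    (hΔ : Summable fun n => h n - h (n + 1)) (hs : Summable fun n => h n • u n) :
    HasSum (fun n => (h n - h (n + 1)) • ∑ i ∈ range (n + 1), u i) (∑' n, h n • u n) := by
  have hΔs : Summable fun n => (h n - h (n + 1)) • ∑ i ∈ range (n + 1), u i :=
    hΔ.smul_of_norm_le fun n => hU (n + 1)
  have hbdry : Tendsto (fun n => h n • ∑ i ∈ range (n + 1), u i) atTop (𝓝 0) :=
    squeeze_zero_norm (a := fun n => |h n| * C) (fun n => by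
      rw [norm_smul, Real.norm_eq_abs]; exact mul_le_mul_of_nonneg_left (hU _) (abs_nonneg _))
      (by simpa using hh.abs.mul_const C)
  have hpartial : Tendsto (fun n => ∑ i ∈ range (n + 1), h i • u i) atTop
      (𝓝 (0 + ∑' n, (h n - h (n + 1)) • ∑ i ∈ range (n + 1), u i)) := by
    refine (hbdry.add hΔs.hasSum.tendsto_sum_nat).congr fun n => ?_
    rw [sum_range_by_parts h u (n + 1), Nat.add_sub_cancel, sub_eq_add_neg, ← sum_neg_distrib]
    simp only [← neg_smul, neg_sub]
  rw [zero_add] at hpartial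
  rw [tendsto_nhds_unique ((tendsto_add_atTop_iff_nat 1).2 hs.hasSum.tendsto_sum_nat) hpartial]
  exact hΔs.hasSum

theorem sum_range_partialSum_succ (a : ℕ → E) (N : ℕ) :
    ∑ n ∈ range N, ∑ k ∈ range (n + 1), a k = ∑ k ∈ range N, ((N : ℝ) - k) • a k := by
  induction N with
  | zero => simp
  | succ N ih =>
    rw [sum_range_succ, ih, sum_range_succ _ N, sum_range_succ _ N]
    push_cast
    simp only [sub_smul, add_smul, one_smul, sum_sub_distrib, sum_add_distrib]
    abel

theorem sum_range_partialSum_succ_sub_eq_zero {a : ℕ → E} {P : ℕ} (hP : P ≠ 0)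
    (hmean : ∑ n ∈ range P, a n = 0) :
    ∑ n ∈ range P, (∑ k ∈ range (n + 1), a k -
      -(P : ℝ)⁻¹ • ∑ n ∈ range P, ((n : ℝ) + 1) • a n) = 0 := by
  have hP' : (P : ℝ) ≠ 0 := Nat.cast_ne_zero.2 hP
  simp only [sum_sub_distrib, sum_range_partialSum_succ, sub_smul, add_smul, one_smul,
    sum_add_distrib, ← smul_sum, hmean, smul_zero, add_zero, zero_sub, sum_const, card_range]
  rw [← Nat.cast_smul_eq_nsmul ℝ, smul_smul, neg_mul, inv_mul_cancel₀ hP', neg_one_smul, sub_self]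

theorem exists_norm_tsum_smul_sub_le [CompleteSpace E] {a : ℕ → E} {P : ℕ} (hP : 0 < P)
    (ha : Periodic a P) (hmean : ∑ n ∈ range P, a n = 0) :
    ∃ C, ∀ g : ℕ → ℝ, Summable g →
      ‖∑' n, g n • a n - g 0 • (-(P : ℝ)⁻¹ • ∑ n ∈ range P, ((n : ℝ) + 1) • a n)‖ ≤
        C * ∑' n, |g n - 2 * g (n + 1) + g (n + 2)| := by
  set A := -(P : ℝ)⁻¹ • ∑ n ∈ range P, ((n : ℝ) + 1) • a n
  set T := fun N => ∑ n ∈ range N, a n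
  set u := fun n => T (n + 1) - A
  have hT : Periodic T P := ha.partialSum hmean
  have hu : Periodic u P := fun n => by simp only [u, Nat.add_right_comm n P 1, hT (n + 1)]
  have hu_mean : ∑ n ∈ range P, u n = 0 := sum_range_partialSum_succ_sub_eq_zero hP.ne' hmean
  obtain ⟨Ca, hCa⟩ := ha.exists_norm_le hP
  obtain ⟨CT, hCT⟩ := hT.exists_norm_le hP
  obtain ⟨Cu, hCu⟩ := hu.exists_norm_le hP
  obtain ⟨CU, hCU⟩ := (hu.partialSum hu_mean).exists_norm_le hP
  refine ⟨CU, fun g hg => ?_⟩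
  set Δ := fun n => g n - g (n + 1)
  have hΔ : Summable Δ := hg.sub ((summable_nat_add_iff 1).2 hg)
  have hΔ2 : Summable fun n => Δ n - Δ (n + 1) := hΔ.sub ((summable_nat_add_iff 1).2 hΔ)
  have hΔu : Summable fun n => Δ n • u n := hΔ.smul_of_norm_le hCu
  have habel₁ := hasSum_sub_smul_partialSum hCT hg.tendsto_atTop_zero hΔ (hg.smul_of_norm_le hCa)
  have habel₂ := hasSum_sub_smul_partialSum hCU hΔ.tendsto_atTop_zero hΔ2 hΔu
  have hsplit : HasSum (fun n => Δ n • T (n + 1)) (g 0 • A + ∑' n, Δ n • u n) := by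
    have htel := (hasSum_sub_of_tendsto hg.tendsto_atTop_zero hΔ).smul_const A
    rw [sub_zero] at htel
    convert htel.add hΔu.hasSum using 2 with n
    simp only [u, Δ, smul_sub]
    abel
  rw [habel₁.unique hsplit, add_sub_cancel_left]
  have hΔ2_eq : ∀ n, Δ n - Δ (n + 1) = g n - 2 * g (n + 1) + g (n + 2) := fun n => by
    simp only [Δ]; ring
  simp only [← hΔ2_eq]
  refine habel₂.norm_le_of_bounded (hΔ2.abs.hasSum.mul_left CU) fun n => ?_
  rw [norm_smul, Real.norm_eq_abs, mul_comm]
  exact mul_le_mul_of_nonneg_right (hCU _) (abs_nonneg _)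

noncomputable def gaussSeq (c : ℝ) (n : ℕ) : ℝ := rexp (-(c * ((n : ℝ) + 1) ^ 2))

section Gaussian

variable {c : ℝ}

theorem sum_range_gaussSeq_le (hc : 0 < c) (N : ℕ) :
    ∑ n ∈ range N, gaussSeq c n ≤ √(π / c) / 2 := by
  have hanti : AntitoneOn (fun x : ℝ => rexp (-c * x ^ 2)) (Set.Icc 0 (0 + N)) :=
    fun x hx y _ hxy => exp_le_exp.2 <| by nlinarith [pow_le_pow_left₀ hx.1 hxy 2]
  calc ∑ n ∈ range N, gaussSeq c n
      = ∑ n ∈ range N, rexp (-c * (0 + ((n + 1 : ℕ) : ℝ)) ^ 2) := by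
        simp only [gaussSeq]; push_cast; ring_nf
    _ ≤ ∫ x in (0 : ℝ)..0 + N, rexp (-c * x ^ 2) := hanti.sum_le_integral
    _ ≤ ∫ x in Set.Ioi 0, rexp (-c * x ^ 2) := by
      rw [intervalIntegral.integral_of_le (by positivity)]
      exact setIntegral_mono_set (integrable_exp_neg_mul_sq hc).integrableOn
        (.of_forall fun x => (exp_pos _).le) Set.Ioc_subset_Ioi_self.eventuallyLE
    _ = √(π / c) / 2 := integral_gaussian_Ioi c

theorem summable_gaussSeq (hc : 0 < c) : Summable (gaussSeq c) :=
  summable_of_sum_range_le (fun _ => (exp_pos _).le) (sum_range_gaussSeq_le hc)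

theorem tsum_gaussSeq_le (hc : 0 < c) : ∑' n, gaussSeq c n ≤ √(π / c) / 2 :=
  Real.tsum_le_of_sum_range_le (fun _ => (exp_pos _).le) (sum_range_gaussSeq_le hc)

theorem mul_exp_neg_le_exp_neg_half {z : ℝ} (hz : 0 ≤ z) : z * rexp (-z) ≤ rexp (-(z / 2)) := by
  have he : 2 ≤ rexp 1 := by linarith [add_one_le_exp 1]
  have hz' : z / 2 ≤ rexp (z / 2) / rexp 1 := by
    rw [← exp_sub]; linarith [add_one_le_exp (z / 2 - 1)]
  have : z ≤ rexp (z / 2) := by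
    rw [le_div_iff₀ (exp_pos 1)] at hz'; nlinarith [exp_pos (z / 2)]
  calc z * rexp (-z) ≤ rexp (z / 2) * rexp (-z) := by gcongr
    _ = rexp (-(z / 2)) := by rw [← exp_add]; ring_nf

theorem abs_exp_neg_mul_sq_second_diff_le (hc : 0 < c) {w : ℝ} (hw : 1 ≤ w) :
    |rexp (-(c * w ^ 2)) - 2 * rexp (-(c * (w + 1) ^ 2)) + rexp (-(c * (w + 2) ^ 2))| ≤
      11 * c * rexp (-(c / 2 * w ^ 2)) := by
  set G := rexp (-(c * w ^ 2))
  set x := rexp (-(c * (2 * w + 1)))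
  set q := rexp (-(2 * c))
  have hx1 : x ≤ 1 := exp_le_one_iff.2 (by nlinarith)
  have hq1 : q ≤ 1 := exp_le_one_iff.2 (by linarith)
  have h1x : 1 - x ≤ 3 * c * w := by nlinarith [add_one_le_exp (-(c * (2 * w + 1)))]
  have h1q : 1 - q ≤ 2 * c := by linarith [add_one_le_exp (-(2 * c))]
  have hG1 : rexp (-(c * (w + 1) ^ 2)) = G * x := by rw [← exp_add]; ring_nf
  have hG2 : rexp (-(c * (w + 2) ^ 2)) = G * x * (x * q) := by
    rw [← exp_add, ← exp_add, ← exp_add]; ring_nf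
  have hsecond : |1 - 2 * x + x * (x * q)| ≤ 9 * c * (c * w ^ 2) + 2 * c := by
    have hx0 : 0 ≤ x := (exp_pos _).le
    have hsq : (1 - x) ^ 2 ≤ 9 * c * (c * w ^ 2) := by
      nlinarith [pow_le_pow_left₀ (sub_nonneg.2 hx1) h1x 2]
    have hxx : x * x * (1 - q) ≤ 2 * c := by
      nlinarith [mul_le_one₀ hx1 hx0 hx1, mul_nonneg hx0 hx0, sub_nonneg.2 hq1]
    rw [show 1 - 2 * x + x * (x * q) = (1 - x) ^ 2 - x * x * (1 - q) by ring, abs_le]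
    constructor <;>
      nlinarith [sq_nonneg (1 - x), mul_nonneg (mul_nonneg hx0 hx0) (sub_nonneg.2 hq1)]
  have hz := mul_exp_neg_le_exp_neg_half (z := c * w ^ 2) (by positivity)
  have hGhalf : G ≤ rexp (-(c / 2 * w ^ 2)) := exp_le_exp.2 (by nlinarith)
  rw [hG1, hG2, show G - 2 * (G * x) + G * x * (x * q) = G * (1 - 2 * x + x * (x * q)) by ring,
    abs_mul, abs_of_pos (exp_pos _)]
  calc G * |1 - 2 * x + x * (x * q)| ≤ G * (9 * c * (c * w ^ 2) + 2 * c) := by gcongr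
    _ = 9 * c * (c * w ^ 2 * G) + 2 * c * G := by ring
    _ ≤ 9 * c * rexp (-(c / 2 * w ^ 2)) + 2 * c * rexp (-(c / 2 * w ^ 2)) := by
      gcongr
      · exact hz.trans_eq (by ring_nf)
    _ = 11 * c * rexp (-(c / 2 * w ^ 2)) := by ring

theorem abs_gaussSeq_second_diff_le (hc : 0 < c) (n : ℕ) :
    |gaussSeq c n - 2 * gaussSeq c (n + 1) + gaussSeq c (n + 2)| ≤ 11 * c * gaussSeq (c / 2) n := by
  have := abs_exp_neg_mul_sq_second_diff_le hc (w := (n : ℝ) + 1) (by simp)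
  simp only [gaussSeq]
  push_cast
  ring_nf at this ⊢
  exact this

theorem tsum_abs_gaussSeq_second_diff_le (hc : 0 < c) :
    ∑' n, |gaussSeq c n - 2 * gaussSeq c (n + 1) + gaussSeq c (n + 2)| ≤ 11 / 2 * √(2 * π * c) := by
  have hsum := (summable_gaussSeq (half_pos hc)).mul_left (11 * c)
  calc _ ≤ ∑' n, 11 * c * gaussSeq (c / 2) n :=
        Summable.tsum_le_tsum (abs_gaussSeq_second_diff_le hc)
          (.of_nonneg_of_le (fun _ => abs_nonneg _) (abs_gaussSeq_second_diff_le hc) hsum) hsum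
    _ ≤ 11 * c * (√(π / (c / 2)) / 2) := by
        rw [tsum_mul_left]; gcongr; exact tsum_gaussSeq_le (half_pos hc)
    _ = 11 / 2 * √(2 * π * c) := by
        rw [show π / (c / 2) = 2 * π * c / c ^ 2 by field_simp, sqrt_div' _ (sq_nonneg c),
          sqrt_sq hc.le]
        field_simp

end Gaussian

theorem tendsto_tsum_abs_gaussSeq_second_diff :
    Tendsto (fun c => ∑' n, |gaussSeq c n - 2 * gaussSeq c (n + 1) + gaussSeq c (n + 2)|)
      (𝓝[>] 0) (𝓝 0) := by
  have hsqrt : Tendsto (fun c => 11 / 2 * √(2 * π * c)) (𝓝[>] 0) (𝓝 0) := by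
    have : Continuous fun c => 11 / 2 * √(2 * π * c) := by fun_prop
    simpa using (this.tendsto 0).mono_left nhdsWithin_le_nhds
  exact squeeze_zero' (.of_forall fun c => tsum_nonneg fun _ => abs_nonneg _)
    (eventually_mem_nhdsWithin.mono fun _ => tsum_abs_gaussSeq_second_diff_le) hsqrt

theorem tendsto_tsum_gaussSeq_smul [CompleteSpace E] {a : ℕ → E} {P : ℕ} (hP : 0 < P)
    (ha : Periodic a P) (hmean : ∑ n ∈ range P, a n = 0) :
    Tendsto (fun c => ∑' n, gaussSeq c n • a n) (𝓝[>] 0)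
      (𝓝 (-(P : ℝ)⁻¹ • ∑ n ∈ range P, ((n : ℝ) + 1) • a n)) := by
  set A := -(P : ℝ)⁻¹ • ∑ n ∈ range P, ((n : ℝ) + 1) • a n
  obtain ⟨C, hC⟩ := exists_norm_tsum_smul_sub_le hP ha hmean
  have hmain : Tendsto (fun c => ∑' n, gaussSeq c n • a n - gaussSeq c 0 • A) (𝓝[>] 0) (𝓝 0) :=
    squeeze_zero_norm' (eventually_mem_nhdsWithin.mono fun c hc => hC _ (summable_gaussSeq hc))
      (by simpa using tendsto_tsum_abs_gaussSeq_second_diff.const_mul C)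
  have hweight : Tendsto (fun c => gaussSeq c 0 • A) (𝓝[>] 0) (𝓝 A) := by
    have : Continuous fun c => gaussSeq c 0 • A := by unfold gaussSeq; fun_prop
    simpa [gaussSeq] using (this.tendsto 0).mono_left nhdsWithin_le_nhds
  simpa using hmain.add hweight

end

theorem sum_range_succ_eq_zero_of_periodic_of_odd {G : Type*} [AddCommGroup G] [IsAddTorsionFree G]
    {f : ℤ → G} {P : ℕ} (hf : Periodic f P) (hodd : ∀ x, f (-x) = -f x) :
    ∑ n ∈ range P, f (n + 1) = 0 := by
  have hshift : ∑ n ∈ range P, f (n + 1) = ∑ n ∈ range P, f n := by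
    have := (sum_range_succ' (fun n : ℕ => f n) P).symm.trans (sum_range_succ _ P)
    push_cast at this
    rwa [← zero_add (P : ℤ), hf 0, add_left_inj] at this
  rw [← self_eq_neg]
  calc ∑ n ∈ range P, f (n + 1) = ∑ n ∈ range P, f ((P - 1 - n : ℕ) + 1) :=
        (sum_range_reflect (fun n : ℕ => f (n + 1)) P).symm
    _ = ∑ n ∈ range P, -f n := sum_congr rfl fun n hn => by
        rw [show ((P - 1 - n : ℕ) : ℤ) + 1 = -n + P by have := mem_range.1 hn; omega, hf, hodd]
    _ = -∑ n ∈ range P, f (n + 1) := by rw [sum_neg_distrib, hshift]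

theorem periodic_cexp_pi_mul_I_mul_sq_div {K : ℕ} (hK : K ≠ 0) :
    Periodic (fun x : ℤ => Complex.exp (π * Complex.I * x ^ 2 / K)) (2 * K : ℕ) := fun x => by
  have hK' : (K : ℂ) ≠ 0 := Nat.cast_ne_zero.2 hK
  simp only
  rw [show (π : ℂ) * Complex.I * ((x + (2 * K : ℕ) : ℤ) : ℂ) ^ 2 / K =
      π * Complex.I * (x : ℂ) ^ 2 / K + (2 * x + 2 * K : ℤ) * (2 * π * Complex.I) by
    push_cast; field_simp; ring, Complex.exp_add, Complex.exp_int_mul_two_pi_mul_I, mul_one]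

def residueSign (M μ : ℕ) (n : ℤ) : ℂ :=
  if (n : ZMod M) = (μ : ZMod M) then 1 else if (n : ZMod M) = -(μ : ZMod M) then -1 else 0

theorem residueSign_periodic (M μ : ℕ) : Periodic (residueSign M μ) M := fun x => by
  simp [residueSign]

theorem residueSign_neg {M μ : ℕ} (hμ : (μ : ZMod M) ≠ -μ) (x : ℤ) :
    residueSign M μ (-x) = -residueSign M μ x := by
  simp only [residueSign, Int.cast_neg, neg_eq_iff_eq_neg]
  split_ifs <;> simp_all

theorem periodic_residueSign_mul_cexp {M N : ℕ} (μ : ℕ) (hM : M ≠ 0) (hN : N ≠ 0) :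
    Periodic (fun x : ℤ => residueSign M μ x * Complex.exp (π * Complex.I * x ^ 2 / (M * N)))
      (2 * M * N : ℕ) := by
  have h1 := (residueSign_periodic M μ).nat_mul (2 * N)
  have h2 := periodic_cexp_pi_mul_I_mul_sq_div (mul_ne_zero hM hN)
  push_cast at h1 h2 ⊢
  rw [show (2 * N * M : ℤ) = 2 * M * N by ring] at h1
  rw [show (2 * (M * N) : ℤ) = 2 * M * N by ring] at h2
  exact h1.mul h2

theorem tendsto_mul_div_nhdsGT {a b : ℝ} (ha : 0 < a) (hb : 0 < b) :
    Tendsto (fun t => a * t / b) (𝓝[>] 0) (𝓝[>] 0) := by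
  refine tendsto_nhdsWithin_iff.2 ⟨?_, eventually_mem_nhdsWithin.mono fun t ht => ?_⟩
  · have : Continuous fun t => a * t / b := by fun_prop
    simpa using (this.tendsto 0).mono_left nhdsWithin_le_nhds
  · exact div_pos (mul_pos ha ht) hb

open Filter in
theorem false_theta_radial_limit_general (M N : ℕ) (hM : 0 < M) (hN : 0 < N)
    (μ : ℕ) (h2μ : ¬ ((M : ℤ) ∣ 2 * μ))
    (ψ : ℤ → ℂ)
    (hψ : ∀ n : ℤ, ψ n =
      if (n : ZMod M) = (μ : ZMod M) then 1
      else if (n : ZMod M) = -(μ : ZMod M) then -1 else 0) :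
    Tendsto (fun t : ℝ => ∑' n : ℕ,
        ψ (n + 1) * Complex.exp (Real.pi * Complex.I * ((n : ℂ) + 1) ^ 2 / (M * N)) *
          Complex.exp (-(Real.pi * ((n : ℝ) + 1) ^ 2 * t / M : ℝ)))
      (nhdsWithin 0 (Set.Ioi 0))
      (nhds (-(1 / (2 * M * N)) * ∑ n ∈ Finset.range (2 * M * N),
        ((n : ℂ) + 1) * ψ (n + 1) *
          Complex.exp (Real.pi * Complex.I * ((n : ℂ) + 1) ^ 2 / (M * N)))) := by
  obtain rfl : ψ = residueSign M μ := funext hψ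
  have hμ : (μ : ZMod M) ≠ -μ := fun h => h2μ <| (ZMod.intCast_zmod_eq_zero_iff_dvd _ M).1 <| by
    push_cast; linear_combination h
  set f : ℤ → ℂ := fun x => residueSign M μ x * Complex.exp (π * Complex.I * x ^ 2 / (M * N))
  have hf : Periodic f (2 * M * N : ℕ) := periodic_residueSign_mul_cexp μ hM.ne' hN.ne'
  have hodd : ∀ x, f (-x) = -f x := fun x => by simp [f, residueSign_neg hμ]
  have ha : Periodic (fun n : ℕ => f (n + 1)) (2 * M * N) := fun n => by
    simpa [add_right_comm] using hf (n + 1)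
  have hlim := (tendsto_tsum_gaussSeq_smul (by positivity) ha
    (sum_range_succ_eq_zero_of_periodic_of_odd hf hodd)).comp
      (tendsto_mul_div_nhdsGT pi_pos (Nat.cast_pos.2 hM))
  convert hlim using 2 with t
  · refine tsum_congr fun n => ?_
    simp only [gaussSeq, f, Complex.real_smul, Complex.ofReal_exp]
    push_cast
    ring_nf
  · rw [Complex.real_smul]
    congr 1
    · push_cast; ring
    · exact sum_congr rfl fun n _ => by simp only [f, Complex.real_smul]; push_cast; ring

open Filter in
/-- Radial limit of the one-dimensional false theta function at `τ = 1/N`. -/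
theorem false_theta_radial_limit (M N : ℕ) (hM : 0 < M) (hN : 0 < N)
    (μ : ℕ) (hμ : μ < M) (h2μ : ¬ ((M : ℤ) ∣ 2 * μ))
    (ψ : ℤ → ℂ)
    (hψ : ∀ n : ℤ, ψ n =
      if (n : ZMod M) = (μ : ZMod M) then 1
      else if (n : ZMod M) = -(μ : ZMod M) then -1 else 0) :
    Tendsto (fun t : ℝ => ∑' n : ℕ,
        ψ (n + 1) * Complex.exp (Real.pi * Complex.I * ((n : ℂ) + 1) ^ 2 / (M * N)) *
          Complex.exp (-(Real.pi * ((n : ℝ) + 1) ^ 2 * t / M : ℝ)))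
      (nhdsWithin 0 (Set.Ioi 0))
      (nhds (-(1 / (2 * M * N)) * ∑ n ∈ Finset.range (2 * M * N),
        ((n : ℂ) + 1) * ψ (n + 1) *
          Complex.exp (Real.pi * Complex.I * ((n : ℂ) + 1) ^ 2 / (M * N)))) :=
  false_theta_radial_limit_general M N hM hN μ h2μ ψ hψ
end

section
/- For $\tau, z$ in the upper half-plane and a real symmetric positive definite $2\times 2$ matrix $A$ with bilinear form $B(\mathbf{x},\mathbf{y}) = \mathbf{x}^T A \mathbf{y}$, quadratic form $Q(\mathbf{x}) = \frac12 B(\mathbf{x},\mathbf{x})$, and a vector $\mathbf{c} \in \mathbb{R}^2$ with $2Q(\mathbf{c})=1$, define $f_{\tau,z}(\mathbf{x}) = B(\mathbf{x},\mathbf{c})\, e^{2\pi i Q(\mathbf{x})\tau}\, e^{\pi i (z-\tau)B(\mathbf{x},\mathbf{c})^2}$. Then the Fourier transform with respect to $B$, namely $\mathcal{F}(f_{\tau,z})(\mathbf{x}) = \int_{\mathbb{R}^2} f_{\tau,z}(\mathbf{y}) e^{-2\pi i B(\mathbf{x},\mathbf{y})}\,d\mathbf{y}$, satisfies $\mathcal{F}(f_{\tau,z})(\mathbf{x})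 = \frac{-i\,(-i\tau)^{-1/2}(-iz)^{-3/2}}{\sqrt{\det A}}\, f_{-1/\tau,\,-1/z}(\mathbf{x})$. -/
/-!
Write `A = CᵀC` with `C` chosen so that `C c = e₀` (a square root of `A` followed by the rotation
taking the unit vector `√A c` to `e₀`). In the coordinates `u = C y` the integrand factors as
`u₀ e^{πi z u₀² - 2πi v₀ u₀} · e^{πi τ u₁² - 2πi v₁ u₁}` with `v = C x`, so the Fourier transform
is `|det C|⁻¹ = (det A)^{-1/2}` times a product of two one-dimensional Gaussian integrals.
-/

open Complex MeasureTheory Matrix Real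
open scoped MatrixOrder

theorem integral_cexp_pi_mul_I_mul_sq_sub {τ : ℂ} (hτ : 0 < τ.im) (x : ℝ) :
    ∫ y : ℝ, cexp (π * I * τ * y ^ 2 - 2 * π * I * x * y) =
      (-I * τ) ^ (-(1 / 2 : ℂ)) * cexp (-π * I * x ^ 2 / τ) := by
  have hb : 0 < (-I * τ).re := by simpa using hτ
  have hτ0 : τ ≠ 0 := by rintro rfl; simp at hτ
  have h := congrFun (fourier_gaussian_pi hb) x
  have hexp : -π / (-I * τ) * x ^ 2 = -π * I * x ^ 2 / τ := by
    field_simp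
    simp
  rw [Real.fourier_real_eq_integral_exp_smul, hexp] at h
  rw [cpow_neg, ← one_div, ← h]
  congr 1 with y
  rw [smul_eq_mul, ← Complex.exp_add]
  push_cast
  ring_nf

/-- The first moment is obtained from the Gaussian integral itself, by integrating the derivative
of the integrand over `ℝ`: this gives `z ∫ y e(y) dy = x ∫ e(y) dy`. -/
theorem integral_mul_cexp_pi_mul_I_mul_sq_sub {z : ℂ} (hz : 0 < z.im) (x : ℝ) :
    ∫ y : ℝ, y * cexp (π * I * z * y ^ 2 - 2 * π * I * x * y) =
      -I * (-I * z) ^ (-(3 / 2 : ℂ)) * x * cexp (-π * I * x ^ 2 / z) := by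
  set e : ℝ → ℂ := fun y => cexp (π * I * z * y ^ 2 - 2 * π * I * x * y) with he_def
  have hb : 0 < (-(π * I * z)).re := by simpa using mul_pos pi_pos hz
  have hz0 : z ≠ 0 := by rintro rfl; simp at hz
  have hderiv (y : ℝ) : HasDerivAt e (2 * π * I * z * (y * e y) - 2 * π * I * x * e y) y := by
    have hq : HasDerivAt (fun w : ℂ => π * I * z * w ^ 2 - 2 * π * I * x * w)
        (π * I * z * (2 * y) - 2 * π * I * x) y := by
      refine (((hasDerivAt_pow 2 (y : ℂ)).const_mul (π * I * z)).fun_sub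
        ((hasDerivAt_id' (y : ℂ)).const_mul (2 * π * I * x))).congr_deriv ?_
      push_cast
      ring
    convert hq.cexp.comp_ofReal using 1
    ring
  have he : Integrable e := by
    simpa [he_def, sub_eq_add_neg, neg_mul, mul_assoc] using
      integrable_cexp_quadratic hb (-2 * π * I * x) 0
  have hye : Integrable (fun y : ℝ => (y : ℂ) * e y) := by
    refine (integrable_mul_cexp_neg_mul_sq hb).congr' (by fun_prop) (.of_forall fun y => ?_)
    simp [he_def, norm_exp, Complex.mul_re, Complex.sub_re]
  have hmoment : z * ∫ y : ℝ, y * e y = x * ∫ y : ℝ, e y := by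
    have h := integral_eq_zero_of_hasDerivAt_of_integrable hderiv
      ((hye.const_mul _).sub (he.const_mul _)) he
    rw [integral_sub (hye.const_mul _) (he.const_mul _), integral_const_mul, integral_const_mul,
      sub_eq_zero] at h
    have h2πI : 2 * π * I ≠ 0 := by simp [pi_ne_zero, I_ne_zero]
    apply mul_left_cancel₀ h2πI
    linear_combination h
  have hsplit : (-I * z) ^ (-(3 / 2 : ℂ)) = (-I * z) ^ (-(1 / 2 : ℂ)) * (-I * z)⁻¹ := by
    rw [← cpow_neg_one, ← cpow_add _ _ (by simpa using hz0)]
    norm_num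
  apply mul_left_cancel₀ hz0
  rw [hmoment, integral_cexp_pi_mul_I_mul_sq_sub hz, hsplit]
  field_simp

theorem integral_comp_mulVec {ι E : Type*} [Fintype ι] [DecidableEq ι] [NormedAddCommGroup E]
    [NormedSpace ℝ E] {M : Matrix ι ι ℝ} (hM : M.det ≠ 0) (g : (ι → ℝ) → E) :
    ∫ y, g (M *ᵥ y) = |M.det|⁻¹ • ∫ y, g y := by
  have hemb : MeasurableEmbedding (M *ᵥ ·) :=
    (M.toLinearEquiv' (M.invertibleOfIsUnitDet hM.isUnit)).toContinuousLinearEquiv.toHomeomorph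
      |>.measurableEmbedding
  have hmap : Measure.map (M *ᵥ ·) volume = ENNReal.ofReal |M.det⁻¹| • volume :=
    Real.map_matrix_volume_pi_eq_smul_volume_pi hM
  rw [← hemb.integral_map, hmap, integral_smul_measure, ENNReal.toReal_ofReal (by positivity),
    abs_inv]

theorem integral_fin_two_arrow_mul (g₁ g₂ : ℝ → ℂ) :
    ∫ u : Fin 2 → ℝ, g₁ (u 0) * g₂ (u 1) = (∫ a, g₁ a) * ∫ a, g₂ a := by
  simpa [Fin.prod_univ_two] using integral_fintype_prod_volume_eq_prod (E := fun _ => ℝ) ![g₁, g₂]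

theorem dotProduct_transpose_mul_self_mulVec {m n : Type*} [Fintype m] [Fintype n]
    (C : Matrix m n ℝ) (p q : n → ℝ) : p ⬝ᵥ (Cᵀ * C) *ᵥ q = C *ᵥ p ⬝ᵥ C *ᵥ q := by
  rw [← mulVec_mulVec, dotProduct_mulVec, vecMul_transpose]

theorem Matrix.PosSemidef.exists_transpose_mul_self_eq {n : Type*} [Fintype n] [DecidableEq n]
    {A : Matrix n n ℝ} (hA : A.PosSemidef) : ∃ B : Matrix n n ℝ, Bᵀ * B = A := by
  obtain ⟨B, rfl⟩ := CStarAlgebra.nonneg_iff_eq_star_mul_self.mp hA.nonneg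
  exact ⟨B, by rw [star_eq_conjTranspose, conjTranspose_eq_transpose_of_trivial]⟩

theorem exists_transpose_mul_self_eq_one_and_mulVec_eq {w : Fin 2 → ℝ} (hw : w ⬝ᵥ w = 1) :
    ∃ R : Matrix (Fin 2) (Fin 2) ℝ, Rᵀ * R = 1 ∧ R *ᵥ w = ![1, 0] := by
  simp only [dotProduct, Fin.sum_univ_two] at hw
  refine ⟨!![w 0, w 1; -w 1, w 0], ?_, ?_⟩
  · ext i j
    fin_cases i <;> fin_cases j <;> simp [mul_apply, Fin.sum_univ_two] <;> grind
  · ext i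
    fin_cases i <;> simp [mulVec, dotProduct, Fin.sum_univ_two] <;> grind

theorem Matrix.PosSemidef.exists_transpose_mul_self_eq_and_mulVec_eq
    {A : Matrix (Fin 2) (Fin 2) ℝ} (hA : A.PosSemidef) {c : Fin 2 → ℝ} (hc : c ⬝ᵥ A *ᵥ c = 1) :
    ∃ C : Matrix (Fin 2) (Fin 2) ℝ, Cᵀ * C = A ∧ C *ᵥ c = ![1, 0] := by
  obtain ⟨S, rfl⟩ := hA.exists_transpose_mul_self_eq
  rw [dotProduct_transpose_mul_self_mulVec] at hc
  obtain ⟨R, hR, hRS⟩ := exists_transpose_mul_self_eq_one_and_mulVec_eq hc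
  refine ⟨R * S, ?_, by rw [← mulVec_mulVec, hRS]⟩
  rw [transpose_mul, mul_assoc, ← mul_assoc Rᵀ, hR, one_mul]

open Complex MeasureTheory Matrix in
theorem fourier_transform_kernel_general (A : Matrix (Fin 2) (Fin 2) ℝ)
    (hpos : A.PosDef)
    (c : Fin 2 → ℝ) (hc : c ⬝ᵥ A.mulVec c = 1)
    (τ z : ℂ) (hτ : 0 < τ.im) (hz : 0 < z.im)
    (f : ℂ → ℂ → (Fin 2 → ℝ) → ℂ)
    (hf : ∀ (τ' z' : ℂ) (x : Fin 2 → ℝ), f τ' z' x =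
      ((x ⬝ᵥ A.mulVec c : ℝ) : ℂ) *
        Complex.exp (2 * Real.pi * I * (((x ⬝ᵥ A.mulVec x : ℝ) : ℂ) / 2) * τ') *
        Complex.exp (Real.pi * I * (z' - τ') * ((x ⬝ᵥ A.mulVec c : ℝ) : ℂ) ^ 2)) :
    ∀ x : Fin 2 → ℝ,
      (∫ y : Fin 2 → ℝ, f τ z y * Complex.exp (-(2 * Real.pi * I * ((x ⬝ᵥ A.mulVec y : ℝ) : ℂ)))) =
        -I * (-I * τ) ^ (-(1 / 2 : ℂ)) * (-I * z) ^ (-(3 / 2 : ℂ)) / Real.sqrt A.det *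
          f (-1 / τ) (-1 / z) x := by
  intro x
  obtain ⟨C, rfl, hCc⟩ := hpos.posSemidef.exists_transpose_mul_self_eq_and_mulVec_eq hc
  have hdet : C.det ≠ 0 := by
    have h := hpos.det_pos
    rw [det_mul, det_transpose] at h
    exact fun h0 => by simp [h0] at h
  have hsqrt : √(Cᵀ * C).det = |C.det| := by
    rw [det_mul, det_transpose, Real.sqrt_mul_self_eq_abs]
  have hform (p : Fin 2 → ℝ) : p ⬝ᵥ (Cᵀ * C) *ᵥ c = (C *ᵥ p) 0 := by
    rw [dotProduct_transpose_mul_self_mulVec, hCc]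
    simp [dotProduct, Fin.sum_univ_two]
  set v := C *ᵥ x
  set g₁ : ℝ → ℂ := fun a => a * cexp (π * I * z * a ^ 2 - 2 * π * I * v 0 * a) with hg₁
  set g₂ : ℝ → ℂ := fun a => cexp (π * I * τ * a ^ 2 - 2 * π * I * v 1 * a) with hg₂
  have hintegrand (y : Fin 2 → ℝ) :
      f τ z y * cexp (-(2 * π * I * ((x ⬝ᵥ (Cᵀ * C) *ᵥ y : ℝ) : ℂ))) =
        g₁ ((C *ᵥ y) 0) * g₂ ((C *ᵥ y) 1) := by
    rw [hf, hg₁, hg₂, hform, dotProduct_transpose_mul_self_mulVec,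
      dotProduct_transpose_mul_self_mulVec]
    simp only [dotProduct, Fin.sum_univ_two, mul_assoc, ← Complex.exp_add]
    congr 2
    push_cast
    ring
  have hrhs : f (-1 / τ) (-1 / z) x =
      v 0 * cexp (-π * I * v 0 ^ 2 / z) * cexp (-π * I * v 1 ^ 2 / τ) := by
    have hτ0 : τ ≠ 0 := by rintro rfl; simp at hτ
    have hz0 : z ≠ 0 := by rintro rfl; simp at hz
    rw [hf, hform, dotProduct_transpose_mul_self_mulVec]
    simp only [dotProduct, Fin.sum_univ_two, mul_assoc, ← Complex.exp_add]
    congr 2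
    push_cast
    field_simp
    ring
  simp_rw [hintegrand]
  rw [integral_comp_mulVec hdet (fun u => g₁ (u 0) * g₂ (u 1)), integral_fin_two_arrow_mul, hg₁,
    hg₂, integral_mul_cexp_pi_mul_I_mul_sq_sub hz, integral_cexp_pi_mul_I_mul_sq_sub hτ, hrhs,
    hsqrt, Complex.real_smul]
  push_cast
  ring

open Complex MeasureTheory Matrix in
/-- Fourier transform of the kernel `f_{τ,z}` of the bivariate theta function. -/
theorem fourier_transform_kernel (A : Matrix (Fin 2) (Fin 2) ℝ)
    (hsymm : A.IsSymm) (hpos : A.PosDef)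
    (c : Fin 2 → ℝ) (hc : c ⬝ᵥ A.mulVec c = 1)
    (τ z : ℂ) (hτ : 0 < τ.im) (hz : 0 < z.im)
    (f : ℂ → ℂ → (Fin 2 → ℝ) → ℂ)
    (hf : ∀ (τ' z' : ℂ) (x : Fin 2 → ℝ), f τ' z' x =
      ((x ⬝ᵥ A.mulVec c : ℝ) : ℂ) *
        Complex.exp (2 * Real.pi * I * (((x ⬝ᵥ A.mulVec x : ℝ) : ℂ) / 2) * τ') *
        Complex.exp (Real.pi * I * (z' - τ') * ((x ⬝ᵥ A.mulVec c : ℝ) : ℂ) ^ 2)) :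
    ∀ x : Fin 2 → ℝ,
      (∫ y : Fin 2 → ℝ, f τ z y * Complex.exp (-(2 * Real.pi * I * ((x ⬝ᵥ A.mulVec y : ℝ) : ℂ)))) =
        -I * (-I * τ) ^ (-(1 / 2 : ℂ)) * (-I * z) ^ (-(3 / 2 : ℂ)) / Real.sqrt A.det *
          f (-1 / τ) (-1 / z) x :=
  fourier_transform_kernel_general A hpos c hc τ z hτ hz f hf
end
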